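/- arXiv:1307.5265 — 4 statements merged into one kernel-verified Lean document; each statement's English description precedes it below -/
import Mathlib

section
/- Let w : [0,R] → ℝ be continuous with w(r) > 0 for r > 0, and let u₁ be a positive decreasing function on [0,R]. Define h(r) = (∫₀^r w(s)^{m-1} ds) / (∫₀^r w(s)^{m-1} u₁(s) ds) for r ∈ (0,R]. Then h is monotone non-decreasing on (0,R]. -/
/-!
For `x₀ < a ≤ b`, write `A, B` for the integrals of `f` and `f u` over `[x₀, a]` and `C, D`
for those over `[a, b]`. The mediant inequality `A / B ≤ (A + C) / (B + D)` is equivalent to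
`A D ≤ B C`, and since `u` is antitone, `D ≤ u a · C` and `u a · A ≤ B`, so
`A D ≤ u a · A C ≤ B C`.
-/

open Set MeasureTheory intervalIntegral

section

variable {f u : ℝ → ℝ} {a b : ℝ}

theorem intervalIntegrable_mul_of_antitoneOn (hab : a ≤ b) (hf : ContinuousOn f (Icc a b))
    (hu : AntitoneOn u (Icc a b)) : IntervalIntegrable (fun x => f x * u x) volume a b := by
  rw [← uIcc_of_le hab] at hf hu
  exact hu.intervalIntegrable.continuousOn_mul hf

theorem integral_nonneg_of_nonneg_on_Ioo (hab : a ≤ b) (hf : IntervalIntegrable f volume a b)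
    (hf0 : ∀ x ∈ Ioo a b, 0 ≤ f x) : 0 ≤ ∫ x in a..b, f x := by
  simpa using integral_mono_on_of_le_Ioo hab intervalIntegrable_const hf hf0

theorem integral_mul_le_mul_integral_of_antitoneOn (hab : a ≤ b)
    (hf : ContinuousOn f (Icc a b)) (hf0 : ∀ x ∈ Ioo a b, 0 ≤ f x) (hu : AntitoneOn u (Icc a b)) :
    ∫ x in a..b, f x * u x ≤ u a * ∫ x in a..b, f x := by
  rw [← intervalIntegral.integral_const_mul]
  refine integral_mono_on_of_le_Ioo hab (intervalIntegrable_mul_of_antitoneOn hab hf hu)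
    ((hf.intervalIntegrable_of_Icc hab).const_mul _) fun x hx => ?_
  rw [mul_comm]
  exact mul_le_mul_of_nonneg_right
    (hu (left_mem_Icc.2 hab) (Ioo_subset_Icc_self hx) hx.1.le) (hf0 x hx)

theorem mul_integral_le_integral_mul_of_antitoneOn (hab : a ≤ b)
    (hf : ContinuousOn f (Icc a b)) (hf0 : ∀ x ∈ Ioo a b, 0 ≤ f x) (hu : AntitoneOn u (Icc a b)) :
    u b * ∫ x in a..b, f x ≤ ∫ x in a..b, f x * u x := by
  rw [← intervalIntegral.integral_const_mul]
  refine integral_mono_on_of_le_Ioo hab ((hf.intervalIntegrable_of_Icc hab).const_mul _)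
    (intervalIntegrable_mul_of_antitoneOn hab hf hu) fun x hx => ?_
  rw [mul_comm]
  exact mul_le_mul_of_nonneg_left
    (hu (Ioo_subset_Icc_self hx) (right_mem_Icc.2 hab) hx.2.le) (hf0 x hx)

theorem div_le_add_div_add_of_le_mul {A B C D k : ℝ} (hA : 0 ≤ A) (hC : 0 ≤ C) (hB : 0 < B)
    (hBD : 0 < B + D) (hkA : k * A ≤ B) (hD : D ≤ k * C) : A / B ≤ (A + C) / (B + D) := by
  have : A * D ≤ B * C := calc
    A * D ≤ A * (k * C) := mul_le_mul_of_nonneg_left hD hA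
    _ = k * A * C := by ring
    _ ≤ B * C := mul_le_mul_of_nonneg_right hkA hC
  rw [div_le_div_iff₀ hB hBD]
  linarith

theorem monotoneOn_integral_div_integral_mul_of_antitoneOn {x₀ R : ℝ}
    (hf : ContinuousOn f (Icc x₀ R)) (hf0 : ∀ x ∈ Ioo x₀ R, 0 ≤ f x)
    (hu : AntitoneOn u (Icc x₀ R)) (hpos : ∀ r ∈ Ioc x₀ R, 0 < ∫ x in x₀..r, f x * u x) :
    MonotoneOn (fun r => (∫ x in x₀..r, f x) / ∫ x in x₀..r, f x * u x) (Ioc x₀ R) := by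
  intro a ha b hb hab
  have hleft : Icc x₀ a ⊆ Icc x₀ R := Icc_subset_Icc_right ha.2
  have hright : Icc a b ⊆ Icc x₀ R := Icc_subset_Icc ha.1.le hb.2
  have hf0_left : ∀ x ∈ Ioo x₀ a, 0 ≤ f x := fun x hx =>
    hf0 x ⟨hx.1, hx.2.trans_le ha.2⟩
  have hf0_right : ∀ x ∈ Ioo a b, 0 ≤ f x := fun x hx =>
    hf0 x ⟨ha.1.trans hx.1, hx.2.trans_le hb.2⟩
  have hf_left : IntervalIntegrable f volume x₀ a :=
    (hf.mono hleft).intervalIntegrable_of_Icc ha.1.le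
  have hf_right : IntervalIntegrable f volume a b :=
    (hf.mono hright).intervalIntegrable_of_Icc hab
  have hsplit_f := integral_add_adjacent_intervals hf_left hf_right
  have hsplit_fu := integral_add_adjacent_intervals
    (intervalIntegrable_mul_of_antitoneOn ha.1.le (hf.mono hleft) (hu.mono hleft))
    (intervalIntegrable_mul_of_antitoneOn hab (hf.mono hright) (hu.mono hright))
  have hpos_b := hpos b hb
  rw [← hsplit_fu] at hpos_b
  dsimp only
  rw [← hsplit_f, ← hsplit_fu]
  exact div_le_add_div_add_of_le_mul
    (integral_nonneg_of_nonneg_on_Ioo ha.1.le hf_left hf0_left)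
    (integral_nonneg_of_nonneg_on_Ioo hab hf_right hf0_right) (hpos a ha) hpos_b
    (mul_integral_le_integral_mul_of_antitoneOn ha.1.le (hf.mono hleft) hf0_left (hu.mono hleft))
    (integral_mul_le_mul_integral_of_antitoneOn hab (hf.mono hright) hf0_right (hu.mono hright))

end

theorem stmt_0_general (m : ℕ) (R : ℝ)
    (w u₁ : ℝ → ℝ)
    (hw : ContinuousOn w (Set.Icc 0 R))
    (hwpos : ∀ r ∈ Set.Ioc (0:ℝ) R, 0 < w r)
    (hu₁pos : ∀ r ∈ Set.Icc (0:ℝ) R, 0 < u₁ r)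
    (hu₁dec : AntitoneOn u₁ (Set.Icc 0 R)) :
    MonotoneOn (fun r => (∫ s in (0:ℝ)..r, w s ^ (m - 1)) /
      (∫ s in (0:ℝ)..r, w s ^ (m - 1) * u₁ s)) (Set.Ioc 0 R) := by
  refine monotoneOn_integral_div_integral_mul_of_antitoneOn (hw.pow _)
    (fun s hs => (pow_pos (hwpos s (Ioo_subset_Ioc_self hs)) _).le) hu₁dec fun r hr => ?_
  have hsub : Icc 0 r ⊆ Icc 0 R := Icc_subset_Icc_right hr.2
  refine intervalIntegral_pos_of_pos_on
    (intervalIntegrable_mul_of_antitoneOn hr.1.le ((hw.pow _).mono hsub) (hu₁dec.mono hsub))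
    (fun s hs => mul_pos (pow_pos (hwpos s ⟨hs.1, hs.2.le.trans hr.2⟩) _)
      (hu₁pos s (hsub (Ioo_subset_Icc_self hs)))) hr.1

/-- the quotient h(r) = (∫₀^r w^{m-1}) / (∫₀^r w^{m-1} u₁) is
monotone non-decreasing on (0,R]. -/
theorem stmt_0 (m : ℕ) (hm : 1 ≤ m) (R : ℝ) (hR : 0 < R)
    (w u₁ : ℝ → ℝ)
    (hw : ContinuousOn w (Set.Icc 0 R))
    (hwpos : ∀ r ∈ Set.Ioc (0:ℝ) R, 0 < w r)
    (hu₁pos : ∀ r ∈ Set.Icc (0:ℝ) R, 0 < u₁ r)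
    (hu₁dec : AntitoneOn u₁ (Set.Icc 0 R)) :
    MonotoneOn (fun r => (∫ s in (0:ℝ)..r, w s ^ (m - 1)) /
      (∫ s in (0:ℝ)..r, w s ^ (m - 1) * u₁ s)) (Set.Ioc 0 R) :=
  stmt_0_general m R w u₁ hw hwpos hu₁pos hu₁dec
end

section
/- Let w : [0,R] → ℝ be continuous with w > 0 on (0,R], and let u₁ : [0,R] → ℝ be positive and decreasing. Then for all 0 < r ≤ t ≤ R, (∫₀^r w^{m-1}) · (∫₀^t w^{m-1} u₁) − (∫₀^t w^{m-1}) · (∫₀^r w^{m-1} u₁) ≤ 0. -/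
open Set intervalIntegral MeasureTheory

/-! Split `∫₀ᵗ = ∫₀ʳ + ∫ᵣᵗ`. Since `u` is antitone, `u r` bounds `u` from below on `[0, r]` and from
above on `[r, t]`, so against the weight `w ^ (m - 1) ≥ 0` the averages of `u` satisfy
`⨍_{[r,t]} u ≤ u r ≤ ⨍_{[0,r]} u`, which is the cross-product inequality after clearing
denominators. -/

section AntitoneWeighted

variable {g u : ℝ → ℝ} {a r t : ℝ}

lemma integral_nonneg_of_nonneg_on_Ioo_s1 (hat : a ≤ t) (hg : IntervalIntegrable g volume a t)
    (hg0 : ∀ s ∈ Ioo a t, 0 ≤ g s) : 0 ≤ ∫ s in a..t, g s := by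
  simpa using integral_mono_on_of_le_Ioo hat intervalIntegrable_const hg hg0

lemma integral_mul_le_mul_integral_of_antitoneOn_s1 (hrt : r ≤ t)
    (hg : IntervalIntegrable g volume r t)
    (hgu : IntervalIntegrable (fun s => g s * u s) volume r t)
    (hg0 : ∀ s ∈ Ioo r t, 0 ≤ g s) (hu : AntitoneOn u (Icc r t)) :
    ∫ s in r..t, g s * u s ≤ u r * ∫ s in r..t, g s := by
  rw [mul_comm (u r), ← intervalIntegral.integral_mul_const]
  refine integral_mono_on_of_le_Ioo hrt hgu (hg.mul_const _) fun s hs => ?_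
  exact mul_le_mul_of_nonneg_left
    (hu (left_mem_Icc.2 hrt) (Ioo_subset_Icc_self hs) hs.1.le) (hg0 s hs)

lemma mul_integral_le_integral_mul_of_antitoneOn_s1 (har : a ≤ r)
    (hg : IntervalIntegrable g volume a r)
    (hgu : IntervalIntegrable (fun s => g s * u s) volume a r)
    (hg0 : ∀ s ∈ Ioo a r, 0 ≤ g s) (hu : AntitoneOn u (Icc a r)) :
    u r * ∫ s in a..r, g s ≤ ∫ s in a..r, g s * u s := by
  rw [mul_comm (u r), ← intervalIntegral.integral_mul_const]
  refine integral_mono_on_of_le_Ioo har (hg.mul_const _) hgu fun s hs => ?_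
  exact mul_le_mul_of_nonneg_left
    (hu (Ioo_subset_Icc_self hs) (right_mem_Icc.2 har) hs.2.le) (hg0 s hs)

theorem integral_mul_integral_le_of_antitoneOn (har : a ≤ r) (hrt : r ≤ t)
    (hg : IntervalIntegrable g volume a t)
    (hgu : IntervalIntegrable (fun s => g s * u s) volume a t)
    (hg0 : ∀ s ∈ Ioo a t, 0 ≤ g s) (hu : AntitoneOn u (Icc a t)) :
    (∫ s in a..r, g s) * (∫ s in a..t, g s * u s) ≤
      (∫ s in a..t, g s) * (∫ s in a..r, g s * u s) := by
  have hr : r ∈ uIcc a t := mem_uIcc.2 (Or.inl ⟨har, hrt⟩)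
  have hsub₁ : uIcc a r ⊆ uIcc a t := uIcc_subset_uIcc_left hr
  have hsub₂ : uIcc r t ⊆ uIcc a t := uIcc_subset_uIcc_right hr
  have hIcc₁ : Icc a r ⊆ Icc a t := Icc_subset_Icc_right hrt
  have hIcc₂ : Icc r t ⊆ Icc a t := Icc_subset_Icc_left har
  rw [← integral_add_adjacent_intervals (hg.mono_set hsub₁) (hg.mono_set hsub₂),
    ← integral_add_adjacent_intervals (hgu.mono_set hsub₁) (hgu.mono_set hsub₂)]
  have hA : 0 ≤ ∫ s in a..r, g s := integral_nonneg_of_nonneg_on_Ioo_s1 har (hg.mono_set hsub₁)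
    fun s hs => hg0 s ⟨hs.1, hs.2.trans_le hrt⟩
  have hB : 0 ≤ ∫ s in r..t, g s := integral_nonneg_of_nonneg_on_Ioo_s1 hrt (hg.mono_set hsub₂)
    fun s hs => hg0 s ⟨har.trans_lt hs.1, hs.2⟩
  have hD := integral_mul_le_mul_integral_of_antitoneOn_s1 hrt (hg.mono_set hsub₂)
    (hgu.mono_set hsub₂) (fun s hs => hg0 s ⟨har.trans_lt hs.1, hs.2⟩) (hu.mono hIcc₂)
  have hC := mul_integral_le_integral_mul_of_antitoneOn_s1 har (hg.mono_set hsub₁)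
    (hgu.mono_set hsub₁) (fun s hs => hg0 s ⟨hs.1, hs.2.trans_le hrt⟩) (hu.mono hIcc₁)
  nlinarith [mul_le_mul_of_nonneg_left hD hA, mul_le_mul_of_nonneg_left hC hB]

end AntitoneWeighted

theorem stmt_1_general (m : ℕ) (R : ℝ)
    (w u₁ : ℝ → ℝ)
    (hw : ContinuousOn w (Set.Icc 0 R))
    (hwpos : ∀ r ∈ Set.Ioc (0:ℝ) R, 0 < w r)
    (hu₁dec : AntitoneOn u₁ (Set.Icc 0 R)) :
    ∀ r t : ℝ, 0 < r → r ≤ t → t ≤ R →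
      (∫ s in (0:ℝ)..r, w s ^ (m - 1)) * (∫ s in (0:ℝ)..t, w s ^ (m - 1) * u₁ s) -
        (∫ s in (0:ℝ)..t, w s ^ (m - 1)) * (∫ s in (0:ℝ)..r, w s ^ (m - 1) * u₁ s) ≤ 0 := by
  intro r t hr hrt htR
  have ht : 0 ≤ t := hr.le.trans hrt
  have hsub : uIcc 0 t ⊆ Icc 0 R := uIcc_subset_Icc (left_mem_Icc.2 (ht.trans htR)) ⟨ht, htR⟩
  have hwt : ContinuousOn (fun s => w s ^ (m - 1)) (uIcc 0 t) := (hw.pow _).mono hsub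
  have hu₁t : AntitoneOn u₁ (Icc 0 t) := hu₁dec.mono (Icc_subset_Icc_right htR)
  refine sub_nonpos.2 <| integral_mul_integral_le_of_antitoneOn hr.le hrt hwt.intervalIntegrable
    ((hu₁dec.mono hsub).intervalIntegrable.continuousOn_mul hwt) (fun s hs => ?_) hu₁t
  exact pow_nonneg (hwpos s ⟨hs.1, hs.2.le.trans htR⟩).le _

/-- cross-product inequality of the moment integrals. -/
theorem stmt_1 (m : ℕ) (hm : 1 ≤ m) (R : ℝ) (hR : 0 < R)
    (w u₁ : ℝ → ℝ)
    (hw : ContinuousOn w (Set.Icc 0 R))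
    (hwpos : ∀ r ∈ Set.Ioc (0:ℝ) R, 0 < w r)
    (hu₁pos : ∀ r ∈ Set.Icc (0:ℝ) R, 0 < u₁ r)
    (hu₁dec : AntitoneOn u₁ (Set.Icc 0 R)) :
    ∀ r t : ℝ, 0 < r → r ≤ t → t ≤ R →
      (∫ s in (0:ℝ)..r, w s ^ (m - 1)) * (∫ s in (0:ℝ)..t, w s ^ (m - 1) * u₁ s) -
        (∫ s in (0:ℝ)..t, w s ^ (m - 1)) * (∫ s in (0:ℝ)..r, w s ^ (m - 1) * u₁ s) ≤ 0 :=
  stmt_1_general m R w u₁ hw hwpos hu₁dec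
end

section
/- For the geodesic ball B^w_R in an m-dimensional model space M^m_w, the first Dirichlet eigenvalue satisfies 1 / (∫₀^R q_w(t) dt) ≤ λ₁(B^w_R) ≤ Vol(B^w_R) / A₁(B^w_R), where q_w(t) = (∫₀^t w^{m-1}(s) ds)/w^{m-1}(t), Vol(B^w_R) = c·∫₀^R w^{m-1}, and A₁(B^w_R) = c·∫₀^R u₁(r) w^{m-1}(r) dr for the mean exit time function u₁ (c the volume of the unit (m−1)-sphere). -/
open Set intervalIntegral

section Aux
open MeasureTheory Filter


lemma my_cs {a b : ℝ} (hab : a ≤ b) {g h : ℝ → ℝ}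
    (hg : ContinuousOn g (Icc a b)) (hh : ContinuousOn h (Icc a b)) :
    (∫ t in a..b, g t * h t) ^ 2 ≤
      (∫ t in a..b, g t ^ 2) * (∫ t in a..b, h t ^ 2) := by
  have huIcc : uIcc a b = Icc a b := uIcc_of_le hab
  have hg2 : IntervalIntegrable (fun t => g t ^ 2) volume a b := by
    apply ContinuousOn.intervalIntegrable; rw [huIcc]; exact (hg.pow 2)
  have hh2 : IntervalIntegrable (fun t => h t ^ 2) volume a b := by
    apply ContinuousOn.intervalIntegrable; rw [huIcc]; exact (hh.pow 2)
  have hgh : IntervalIntegrable (fun t => g t * h t) volume a b := by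
    apply ContinuousOn.intervalIntegrable; rw [huIcc]; exact (hg.mul hh)
  set A := ∫ t in a..b, g t ^ 2 with hA
  set B := ∫ t in a..b, g t * h t with hB
  set C := ∫ t in a..b, h t ^ 2 with hC
  have key : ∀ x : ℝ, 0 ≤ A * (x * x) + (2 * B) * x + C := by
    intro x
    have h1 : (0:ℝ) ≤ ∫ t in a..b, (x * g t + h t) ^ 2 :=
      intervalIntegral.integral_nonneg hab (fun t _ => sq_nonneg _)
    have h2 : (∫ t in a..b, (x * g t + h t) ^ 2) =
        A * (x * x) + (2 * B) * x + C := by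
      have : (fun t => (x * g t + h t) ^ 2) =
          (fun t => (x * x) * (g t ^ 2) + ((2 * x) * (g t * h t) + h t ^ 2)) := by
        funext t; ring
      rw [this, intervalIntegral.integral_add ((hg2.const_mul _))
          (((hgh.const_mul _)).add hh2),
        intervalIntegral.integral_add (hgh.const_mul _) hh2,
        intervalIntegral.integral_const_mul, intervalIntegral.integral_const_mul]
      ring
    linarith [h2 ▸ h1]
  have hd := discrim_le_zero key
  rw [discrim] at hd
  nlinarith [hd]


lemma aux_cwa (m : ℕ) (hm : 2 ≤ m) (R : ℝ) (hR : 0 < R)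
    (w : ℝ → ℝ) (hw : ContDiff ℝ (⊤ : ℕ∞) w) (hw0 : w 0 = 0) (hw1 : deriv w 0 = 1)
    (hwpos : ∀ r ∈ Set.Ioc (0:ℝ) R, 0 < w r)
    (q : ℝ → ℝ)
    (ω : ℝ → ℝ) (hωdef : ω = fun r => w r ^ (m-1))
    (W : ℝ → ℝ) (hWdef : W = fun r => ∫ t in (0:ℝ)..r, ω t)
    (hqW : ∀ t : ℝ, q t = W t / ω t)
    (hwnn : ∀ r ∈ Icc (0:ℝ) R, 0 ≤ w r)
    (hωint : ∀ a b : ℝ, IntervalIntegrable ω volume a b)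
    (hqnn : ∀ t ∈ Icc (0:ℝ) R, 0 ≤ q t) :
    ContinuousWithinAt q (Icc (0:ℝ) R) 0 := by
  have hq00 : q 0 = 0 := by
    rw [hqW, hWdef]; simp
  have hwd : HasDerivAt w 1 0 := by
    have := (hw.differentiable (by simp)).differentiableAt (x := 0)
    have h := this.hasDerivAt
    rwa [hw1] at h
  have hslope : Tendsto (fun t => w t / t) (nhdsWithin 0 {(0:ℝ)}ᶜ) (nhds 1) := by
    have h := hasDerivAt_iff_tendsto_slope.mp hwd
    apply h.congr'
    filter_upwards [self_mem_nhdsWithin] with t ht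
    simp [slope, hw0, div_eq_inv_mul]
  have hev : ∀ᶠ t in nhdsWithin 0 {(0:ℝ)}ᶜ, w t / t ∈ Ioo (1/2 : ℝ) 2 :=
    hslope (Ioo_mem_nhds (by norm_num) (by norm_num))
  rw [eventually_nhdsWithin_iff, Metric.eventually_nhds_iff] at hev
  obtain ⟨δ, hδ, hball⟩ := hev
  -- main pointwise bound
  have hbound : ∀ t ∈ Icc (0:ℝ) R, |t - 0| < δ → q t ≤ 4 ^ (m-1) * t := by
    intro t ht htδ
    rcases eq_or_lt_of_le ht.1 with h0 | h0
    · rw [← h0, hq00]; simp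
    · have htδ' : dist t 0 < δ := by simpa [Real.dist_eq] using htδ
      have hslt : ∀ s, 0 < s → s ≤ t → w s / s ∈ Ioo (1/2:ℝ) 2 := by
        intro s hs hst
        apply hball
        · simp only [Real.dist_eq, sub_zero, abs_of_pos hs]
          calc s ≤ t := hst
            _ < δ := by
              have := htδ'
              rw [Real.dist_eq, sub_zero, abs_of_pos h0] at this
              exact this
        · exact hs.ne'
      have hwt := hslt t h0 le_rfl
      have hwtl : t/2 < w t := by
        have := hwt.1
        rw [lt_div_iff₀ h0] at this; linarith
      have hwtu : ∀ s, 0 < s → s ≤ t → w s < 2 * s := by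
        intro s hs hst
        have := (hslt s hs hst).2
        rw [div_lt_iff₀ hs] at this; linarith
      -- W t ≤ t * (2*t)^(m-1)
      have hWle : W t ≤ t * (2*t)^(m-1) := by
        rw [hWdef]
        calc (∫ s in (0:ℝ)..t, ω s) ≤ ∫ s in (0:ℝ)..t, (2*t)^(m-1) := by
              apply intervalIntegral.integral_mono_on h0.le (hωint 0 t)
                (intervalIntegrable_const)
              intro s hs
              rw [hωdef]
              apply pow_le_pow_left₀ (hwnn s ⟨hs.1, hs.2.trans ht.2⟩)
              rcases eq_or_lt_of_le hs.1 with h1 | h1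
              · rw [← h1, hw0]; positivity
              · exact le_trans (hwtu s h1 hs.2).le (by linarith [hs.2])
          _ = t * (2*t)^(m-1) := by simp
      have hωget : (t/2)^(m-1) ≤ ω t := by
        rw [hωdef]
        exact pow_le_pow_left₀ (by positivity) hwtl.le _
      have hpow : (0:ℝ) < (t/2)^(m-1) := by positivity
      have hWnn' : 0 ≤ W t := by
        rw [hWdef]
        apply intervalIntegral.integral_nonneg h0.le
        intro s hs
        rw [hωdef]
        exact pow_nonneg (hwnn s ⟨hs.1, hs.2.trans ht.2⟩) _
      calc q t = W t / ω t := hqW t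
        _ ≤ W t / (t/2)^(m-1) :=
            div_le_div_of_nonneg_left hWnn' hpow hωget
        _ ≤ (t * (2*t)^(m-1)) / (t/2)^(m-1) := by gcongr
        _ = 4^(m-1) * t := by
            have h2t : (2*t:ℝ) = 4 * (t/2) := by ring
            rw [h2t, mul_pow, mul_comm (t:ℝ), mul_assoc, mul_div_assoc,
              mul_comm ((t/2)^(m-1)) t, mul_div_assoc, div_self hpow.ne', mul_one]
  -- squeeze
  have hself : ∀ᶠ t in nhdsWithin (0:ℝ) (Icc 0 R), t ∈ Icc (0:ℝ) R :=
    self_mem_nhdsWithin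
  have hnear : ∀ᶠ t in nhdsWithin (0:ℝ) (Icc 0 R), |t - 0| < δ := by
    apply Filter.Eventually.filter_mono nhdsWithin_le_nhds
    have : Metric.ball (0:ℝ) δ ∈ nhds (0:ℝ) := Metric.ball_mem_nhds _ hδ
    filter_upwards [this] with t ht
    simpa [Real.dist_eq] using ht
  have htend : Tendsto q (nhdsWithin 0 (Icc (0:ℝ) R)) (nhds 0) := by
    apply squeeze_zero' (g := fun t => 4^(m-1) * t)
    · filter_upwards [hself] with t ht; exact hqnn t ht
    · filter_upwards [hself, hnear] with t ht ht2; exact hbound t ht ht2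
    · have : Tendsto (fun t : ℝ => 4^(m-1) * t) (nhds 0) (nhds (4^(m-1) * 0)) :=
        (continuous_const.mul continuous_id).tendsto 0
      simpa using this.mono_left nhdsWithin_le_nhds
  rw [ContinuousWithinAt, hq00]
  exact htend

lemma aux_lower (m : ℕ) (R : ℝ) (hR : 0 < R)
    (w : ℝ → ℝ) (hwc : Continuous w) (hw0 : w 0 = 0)
    (hwpos : ∀ r ∈ Set.Ioc (0:ℝ) R, 0 < w r)
    (q : ℝ → ℝ)
    (ω : ℝ → ℝ) (hωdef : ω = fun r => w r ^ (m-1))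
    (hωc : Continuous ω)
    (hωnn : ∀ r ∈ Icc (0:ℝ) R, 0 ≤ ω r)
    (hωpos : ∀ r ∈ Ioc (0:ℝ) R, 0 < ω r)
    (hωint : ∀ a b : ℝ, IntervalIntegrable ω volume a b)
    (W : ℝ → ℝ) (hWdef : W = fun r => ∫ t in (0:ℝ)..r, ω t)
    (hWd : ∀ r : ℝ, HasDerivAt W (ω r) r)
    (hWc : Continuous W)
    (hWnn : ∀ r ∈ Icc (0:ℝ) R, 0 ≤ W r)
    (hqW : ∀ t : ℝ, q t = W t / ω t)
    (hqca : ∀ t : ℝ, w t ≠ 0 → ContinuousAt q t)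
    (hqcon : ContinuousOn q (Icc (0:ℝ) R))
    (hqnn : ∀ t ∈ Icc (0:ℝ) R, 0 ≤ q t)
    (hqint : IntervalIntegrable q volume 0 R)
    (Q : ℝ) (hQdef : Q = ∫ t in (0:ℝ)..R, q t) (hQpos : 0 < Q)
    (f : ℝ → ℝ) (hf : ContDiff ℝ 1 f) (hfR : f R = 0)
    (hD : (∫ r in (0:ℝ)..R, (f r) ^ 2 * ω r) ≠ 0) :
    1 / Q ≤ (∫ r in (0:ℝ)..R, (deriv f r) ^ 2 * ω r) /
      (∫ r in (0:ℝ)..R, (f r) ^ 2 * ω r) := by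
  have hR' : (0:ℝ) ≤ R := hR.le
  have hfc : Continuous f := hf.continuous
  have hf' : Continuous (deriv f) := hf.continuous_deriv le_rfl
  have hfd : ∀ x : ℝ, DifferentiableAt ℝ f x := fun x =>
    (hf.differentiable (by norm_num)).differentiableAt
  set D : ℝ := ∫ r in (0:ℝ)..R, (f r) ^ 2 * ω r with hDdef
  set N : ℝ := ∫ r in (0:ℝ)..R, (deriv f r) ^ 2 * ω r with hNdef
  have hconf2 : Continuous fun r => (f r) ^ 2 * ω r := ((hfc.pow 2).mul hωc)
  have hconN : Continuous fun r => (deriv f r) ^ 2 * ω r := ((hf'.pow 2).mul hωc)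
  have hDpos : 0 < D := by
    rcases lt_or_eq_of_le (intervalIntegral.integral_nonneg hR'
      (fun r hr => mul_nonneg (sq_nonneg _) (hωnn r hr))) with h | h
    · exact h
    · exact absurd h.symm hD
  have hNnn : 0 ≤ N := intervalIntegral.integral_nonneg hR'
    (fun r hr => mul_nonneg (sq_nonneg _) (hωnn r hr))
  -- G
  set G : ℝ → ℝ := fun r => ∫ t in r..R, (ω t)⁻¹ with hGdef
  have hU : IsOpen {x : ℝ | w x ≠ 0} := isOpen_ne.preimage hwc
  have hωinv_ca : ∀ r ∈ Ioc (0:ℝ) R, ContinuousAt (fun t => (ω t)⁻¹) r :=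
    fun r hr => (hωc.continuousAt).inv₀ (hωpos r hr).ne'
  have hωinv_int : ∀ r ∈ Ioc (0:ℝ) R, IntervalIntegrable (fun t => (ω t)⁻¹) volume r R := by
    intro r hr
    apply ContinuousOn.intervalIntegrable
    rw [uIcc_of_le hr.2]
    intro t ht
    exact ((hωc.continuousAt).inv₀
      (hωpos t ⟨lt_of_lt_of_le hr.1 ht.1, ht.2⟩).ne').continuousWithinAt
  have hGd : ∀ r ∈ Ioc (0:ℝ) R, HasDerivAt G (-(ω r)⁻¹) r := by
    intro r hr
    apply intervalIntegral.integral_hasDerivAt_left (hωinv_int r hr)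
    · refine ContinuousOn.stronglyMeasurableAtFilter hU ?_ r ?_
      · intro x hx
        exact ((hωc.continuousAt).inv₀
          (by rw [hωdef]; exact pow_ne_zero _ hx)).continuousWithinAt
      · exact (hwpos r hr).ne'
    · exact hωinv_ca r hr
  have hGnn : ∀ r ∈ Ioc (0:ℝ) R, 0 ≤ G r := by
    intro r hr
    apply intervalIntegral.integral_nonneg hr.2
    intro t ht
    exact (inv_nonneg).2 (hωpos t ⟨lt_of_lt_of_le hr.1 ht.1, ht.2⟩).le
  -- pointwise Cauchy-Schwarz bound
  have hpoint : ∀ r ∈ Ioc (0:ℝ) R, f r ^ 2 ≤ N * G r := by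
    intro r hr
    have hrR : r ≤ R := hr.2
    have hfr : f r ^ 2 = (∫ t in r..R, deriv f t) ^ 2 := by
      rw [intervalIntegral.integral_deriv_eq_sub (fun x _ => hfd x)
        ((hf'.intervalIntegrable r R)), hfR]
      ring
    have hωpos' : ∀ t ∈ Icc r R, 0 < ω t :=
      fun t ht => hωpos t ⟨lt_of_lt_of_le hr.1 ht.1, ht.2⟩
    set g1 : ℝ → ℝ := fun t => deriv f t * Real.sqrt (ω t) with hg1
    set h1 : ℝ → ℝ := fun t => (Real.sqrt (ω t))⁻¹ with hh1
    have hsqc : Continuous fun t => Real.sqrt (ω t) :=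
      Real.continuous_sqrt.comp hωc
    have hg1c : ContinuousOn g1 (Icc r R) := (hf'.mul hsqc).continuousOn
    have hh1c : ContinuousOn h1 (Icc r R) := by
      intro t ht
      exact ((hsqc.continuousAt).inv₀
        (Real.sqrt_ne_zero'.2 (hωpos' t ht))).continuousWithinAt
    have hcs := my_cs hrR hg1c hh1c
    have e1 : (∫ t in r..R, g1 t * h1 t) = ∫ t in r..R, deriv f t := by
      apply intervalIntegral.integral_congr
      intro t ht
      rw [uIcc_of_le hrR] at ht
      have : Real.sqrt (ω t) ≠ 0 := Real.sqrt_ne_zero'.2 (hωpos' t ht)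
      simp only [hg1, hh1]; field_simp
    have e2 : (∫ t in r..R, g1 t ^ 2) = ∫ t in r..R, (deriv f t) ^ 2 * ω t := by
      apply intervalIntegral.integral_congr
      intro t ht
      rw [uIcc_of_le hrR] at ht
      show (deriv f t * Real.sqrt (ω t)) ^ 2 = deriv f t ^ 2 * ω t
      rw [mul_pow, Real.sq_sqrt (hωpos' t ht).le]
    have e3 : (∫ t in r..R, h1 t ^ 2) = G r := by
      apply intervalIntegral.integral_congr
      intro t ht
      rw [uIcc_of_le hrR] at ht
      show ((Real.sqrt (ω t))⁻¹) ^ 2 = (ω t)⁻¹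
      rw [inv_pow, Real.sq_sqrt (hωpos' t ht).le]
    rw [e1, e2, e3] at hcs
    have hNsplit : (∫ t in r..R, (deriv f t) ^ 2 * ω t) ≤ N := by
      have hint1 : IntervalIntegrable (fun t => (deriv f t)^2 * ω t) volume 0 r :=
        hconN.intervalIntegrable _ _
      have hint2 : IntervalIntegrable (fun t => (deriv f t)^2 * ω t) volume r R :=
        hconN.intervalIntegrable _ _
      have := intervalIntegral.integral_add_adjacent_intervals hint1 hint2
      have h1nn : 0 ≤ ∫ t in (0:ℝ)..r, (deriv f t)^2 * ω t := by
        apply intervalIntegral.integral_nonneg hr.1.le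
        intro t ht
        exact mul_nonneg (sq_nonneg _) (hωnn t ⟨ht.1, ht.2.trans hrR⟩)
      rw [hNdef, ← this]
      linarith
    calc f r ^ 2 = (∫ t in r..R, deriv f t) ^ 2 := hfr
      _ ≤ (∫ t in r..R, (deriv f t) ^ 2 * ω t) * G r := hcs
      _ ≤ N * G r := by
          apply mul_le_mul_of_nonneg_right hNsplit (hGnn r hr)
  -- integration by parts estimate: ∫_ε^R G ω ≤ Q
  have hIBP : ∀ ε ∈ Ioo (0:ℝ) R, (∫ r in ε..R, G r * ω r) ≤ Q := by
    intro ε hε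
    have hεR : ε ≤ R := hε.2.le
    set P : ℝ → ℝ := fun r => ∫ t in ε..r, q t with hP
    have hqca' : ∀ r ∈ Icc ε R, ContinuousAt q r :=
      fun r hrc => hqca r (hwpos r ⟨lt_of_lt_of_le hε.1 hrc.1, hrc.2⟩).ne'
    have hqint' : ∀ r ∈ Icc ε R, IntervalIntegrable q volume ε r := by
      intro r hrc
      apply ContinuousOn.intervalIntegrable
      rw [uIcc_of_le hrc.1]
      intro t ht
      exact (hqca' t ⟨ht.1, ht.2.trans hrc.2⟩).continuousWithinAt
    have hPd : ∀ r ∈ Icc ε R, HasDerivAt P (q r) r := by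
      intro r hrc
      apply intervalIntegral.integral_hasDerivAt_right (hqint' r hrc)
      · refine ContinuousOn.stronglyMeasurableAtFilter hU ?_ r ?_
        · intro x hx
          exact (hqca x hx).continuousWithinAt
        · exact (hwpos r ⟨lt_of_lt_of_le hε.1 hrc.1, hrc.2⟩).ne'
      · exact hqca' r hrc
    have hGd' : ∀ r ∈ Icc ε R, HasDerivAt G (-(ω r)⁻¹) r :=
      fun r hrc => hGd r ⟨lt_of_lt_of_le hε.1 hrc.1, hrc.2⟩
    set Φ : ℝ → ℝ := fun r => G r * W r + P r with hΦ
    have hΦd : ∀ r ∈ Icc ε R, HasDerivAt Φ (G r * ω r) r := by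
      intro r hrc
      have h1 := ((hGd' r hrc).mul (hWd r)).add (hPd r hrc)
      have hωne : ω r ≠ 0 :=
        (hωpos r ⟨lt_of_lt_of_le hε.1 hrc.1, hrc.2⟩).ne'
      have : -(ω r)⁻¹ * W r + G r * ω r + q r = G r * ω r := by
        rw [hqW r]
        field_simp
        ring
      rwa [this] at h1
    have hΦcont : ContinuousOn Φ (Icc ε R) :=
      fun r hrc => ((hΦd r hrc).continuousAt).continuousWithinAt
    have hGcont : ContinuousOn G (Icc ε R) :=
      fun r hrc => ((hGd' r hrc).continuousAt).continuousWithinAt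
    have hGωint : IntervalIntegrable (fun r => G r * ω r) volume ε R := by
      apply ContinuousOn.intervalIntegrable
      rw [uIcc_of_le hεR]
      exact hGcont.mul hωc.continuousOn
    have hFTC := intervalIntegral.integral_eq_sub_of_hasDeriv_right_of_le hεR
      hΦcont (fun x hx => ((hΦd x ⟨hx.1.le, hx.2.le⟩).hasDerivWithinAt)) hGωint
    have hGR : G R = 0 := by rw [hGdef]; simp
    have hPε : P ε = 0 := by rw [hP]; simp
    have hqεR : (∫ t in ε..R, q t) ≤ Q := by
      have hq1 : IntervalIntegrable q volume 0 ε := by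
        apply ContinuousOn.intervalIntegrable
        rw [uIcc_of_le hε.1.le]
        exact hqcon.mono (Icc_subset_Icc le_rfl hεR)
      have hq2 : IntervalIntegrable q volume ε R := hqint' R ⟨hεR, le_rfl⟩
      have hsplit := intervalIntegral.integral_add_adjacent_intervals hq1 hq2
      have h1nn : 0 ≤ ∫ t in (0:ℝ)..ε, q t :=
        intervalIntegral.integral_nonneg hε.1.le
          (fun t ht => hqnn t ⟨ht.1, ht.2.trans hεR⟩)
      rw [hQdef, ← hsplit]
      linarith
    have hGWε : 0 ≤ G ε * W ε :=
      mul_nonneg (hGnn ε ⟨hε.1, hεR⟩) (hWnn ε ⟨hε.1.le, hεR⟩)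
    rw [hFTC]
    have : Φ R - Φ ε = (∫ t in ε..R, q t) - G ε * W ε := by
      simp only [hΦ, hGR, hP]
      rw [intervalIntegral.integral_same]
      ring
    rw [this]
    linarith
  -- uniform bound C for f^2 ω on [0,R]
  obtain ⟨C0, hC0⟩ := (isCompact_Icc (a := (0:ℝ)) (b := R)).exists_bound_of_continuousOn
    hconf2.continuousOn
  set C : ℝ := max C0 0 with hC
  have hCnn : 0 ≤ C := le_max_right _ _
  have hCb : ∀ x ∈ Icc (0:ℝ) R, |f x ^ 2 * ω x| ≤ C :=
    fun x hx => le_trans (hC0 x hx) (le_max_left _ _)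
  -- main estimate for each ε
  have hmain : ∀ ε ∈ Ioo (0:ℝ) R, D ≤ N * Q + C * ε := by
    intro ε hε
    have hεR : ε ≤ R := hε.2.le
    have hint1 : IntervalIntegrable (fun r => f r ^ 2 * ω r) volume 0 ε :=
      hconf2.intervalIntegrable _ _
    have hint2 : IntervalIntegrable (fun r => f r ^ 2 * ω r) volume ε R :=
      hconf2.intervalIntegrable _ _
    have hsplit := intervalIntegral.integral_add_adjacent_intervals hint1 hint2
    have h0ε : |∫ r in (0:ℝ)..ε, f r ^ 2 * ω r| ≤ C * ε := by
      have := intervalIntegral.norm_integral_le_of_norm_le_const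
        (C := C) (f := fun r => f r ^ 2 * ω r) (a := 0) (b := ε) ?_
      · rw [Real.norm_eq_abs] at this
        simpa [abs_of_pos hε.1] using this
      · intro x hx
        rw [uIoc_of_le hε.1.le] at hx
        exact hCb x ⟨hx.1.le, hx.2.trans hεR⟩
    have hεRbound : (∫ r in ε..R, f r ^ 2 * ω r) ≤ N * Q := by
      have hGωint : IntervalIntegrable (fun r => N * (G r * ω r)) volume ε R := by
        apply ContinuousOn.intervalIntegrable
        rw [uIcc_of_le hεR]
        apply ContinuousOn.mul continuousOn_const
        apply ContinuousOn.mul ?_ hωc.continuousOn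
        intro r hrc
        exact ((hGd r ⟨lt_of_lt_of_le hε.1 hrc.1, hrc.2⟩).continuousAt).continuousWithinAt
      calc (∫ r in ε..R, f r ^ 2 * ω r)
          ≤ ∫ r in ε..R, N * (G r * ω r) := by
            apply intervalIntegral.integral_mono_on hεR hint2 hGωint
            intro x hx
            have hx' : x ∈ Ioc (0:ℝ) R := ⟨lt_of_lt_of_le hε.1 hx.1, hx.2⟩
            have h1 : f x ^ 2 ≤ N * G x := hpoint x hx'
            have h2 : 0 ≤ ω x := (hωpos x hx').le
            calc f x ^ 2 * ω x ≤ (N * G x) * ω x :=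
                  mul_le_mul_of_nonneg_right h1 h2
              _ = N * (G x * ω x) := by ring
        _ = N * ∫ r in ε..R, G r * ω r := intervalIntegral.integral_const_mul _ _
        _ ≤ N * Q := mul_le_mul_of_nonneg_left (hIBP ε hε) hNnn
    have habs : (∫ r in (0:ℝ)..ε, f r ^ 2 * ω r) ≤ C * ε :=
      le_trans (le_abs_self _) h0ε
    rw [hDdef, ← hsplit]
    linarith
  -- conclude D ≤ N * Q
  have hDNQ : D ≤ N * Q := by
    apply le_of_forall_pos_le_add
    intro δ hδ
    set ε : ℝ := min (R/2) (δ/(C+1)) with hε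
    have hε1 : 0 < ε := lt_min (by linarith) (by positivity)
    have hε2 : ε < R := lt_of_le_of_lt (min_le_left _ _) (by linarith)
    have h := hmain ε ⟨hε1, hε2⟩
    have hCe : C * ε ≤ δ := by
      have h1 : ε ≤ δ/(C+1) := min_le_right _ _
      have h2 : C * ε ≤ C * (δ/(C+1)) := mul_le_mul_of_nonneg_left h1 hCnn
      have h3 : C * (δ/(C+1)) ≤ δ := by
        rw [mul_div_assoc']
        rw [div_le_iff₀ (by linarith)]
        nlinarith
      linarith
    linarith
  -- final
  rw [div_le_div_iff₀ hQpos hDpos]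
  calc 1 * D = D := one_mul D
    _ ≤ N * Q := hDNQ
    _ = (∫ r in (0:ℝ)..R, deriv f r ^ 2 * ω r) * Q := by rw [hNdef]

lemma aux_upper (m : ℕ) (R : ℝ) (hR : 0 < R)
    (w : ℝ → ℝ) (hwc : Continuous w) (hw0 : w 0 = 0)
    (hwpos : ∀ r ∈ Set.Ioc (0:ℝ) R, 0 < w r)
    (c : ℝ) (hc : 0 < c)
    (q u₁ : ℝ → ℝ)
    (ω : ℝ → ℝ) (hωdef : ω = fun r => w r ^ (m-1))
    (hωc : Continuous ω)
    (hωnn : ∀ r ∈ Icc (0:ℝ) R, 0 ≤ ω r)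
    (hωpos : ∀ r ∈ Ioc (0:ℝ) R, 0 < ω r)
    (hωint : ∀ a b : ℝ, IntervalIntegrable ω volume a b)
    (W : ℝ → ℝ) (hWdef : W = fun r => ∫ t in (0:ℝ)..r, ω t)
    (hWd : ∀ r : ℝ, HasDerivAt W (ω r) r)
    (hWc : Continuous W)
    (hqW : ∀ t : ℝ, q t = W t / ω t)
    (hqca : ∀ t : ℝ, w t ≠ 0 → ContinuousAt q t)
    (hqcon : ContinuousOn q (Icc (0:ℝ) R))
    (hqnn : ∀ t ∈ Icc (0:ℝ) R, 0 ≤ q t)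
    (hqpos : ∀ t ∈ Ioc (0:ℝ) R, 0 < q t)
    (hu₁ : ∀ r : ℝ, u₁ r = ∫ t in r..R, q t)
    (S : Set ℝ) (hS : S = {lam : ℝ | ∃ f : ℝ → ℝ, ContDiff ℝ 1 f ∧ f R = 0 ∧
      (∫ r in (0:ℝ)..R, (f r) ^ 2 * ω r) ≠ 0 ∧
      lam = (∫ r in (0:ℝ)..R, (deriv f r) ^ 2 * ω r) /
        (∫ r in (0:ℝ)..R, (f r) ^ 2 * ω r)}) :
    ∃ lam₀ ∈ S, lam₀ ≤
      (c * ∫ r in (0:ℝ)..R, ω r) /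
        (c * ∫ r in (0:ℝ)..R, u₁ r * ω r) := by
  have hR' : (0:ℝ) ≤ R := hR.le
  -- the clamped q and test function
  set qt : ℝ → ℝ := fun x => q (projIcc 0 R hR' x) with hqt
  have hqtc : Continuous qt := by
    apply ContinuousOn.comp_continuous
      (s := Icc (0:ℝ) R) hqcon (continuous_projIcc.subtype_val)
    intro x; exact (projIcc 0 R hR' x).2
  have hqteq : ∀ t ∈ Icc (0:ℝ) R, qt t = q t := by
    intro t ht; rw [hqt]; simp [projIcc_of_mem hR' ht]
  set f₀ : ℝ → ℝ := fun r => ∫ t in r..R, qt t with hf₀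
  have hf₀d : ∀ r : ℝ, HasDerivAt f₀ (-qt r) r := fun r =>
    intervalIntegral.integral_hasDerivAt_left (hqtc.intervalIntegrable r R)
      (hqtc.stronglyMeasurableAtFilter _ _) hqtc.continuousAt
  have hf₀deriv : deriv f₀ = fun r => -qt r := funext fun r => (hf₀d r).deriv
  have hf₀cd : ContDiff ℝ 1 f₀ := by
    rw [contDiff_one_iff_deriv]
    exact ⟨fun x => (hf₀d x).differentiableAt, by rw [hf₀deriv]; exact hqtc.neg⟩
  have hf₀R : f₀ R = 0 := by rw [hf₀]; simp
  have hf₀u : ∀ r ∈ Icc (0:ℝ) R, f₀ r = u₁ r := by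
    intro r hrc
    rw [hf₀, hu₁]
    apply intervalIntegral.integral_congr
    intro t ht
    rw [uIcc_of_le hrc.2] at ht
    exact hqteq t ⟨le_trans hrc.1 ht.1, ht.2⟩
  have hu₁cont : ContinuousOn u₁ (Icc (0:ℝ) R) := by
    have : ContinuousOn f₀ (Icc (0:ℝ) R) := hf₀cd.continuous.continuousOn
    exact this.congr (fun r hrc => (hf₀u r hrc).symm)
  have hu₁nn : ∀ r ∈ Icc (0:ℝ) R, 0 ≤ u₁ r := by
    intro r hrc
    rw [hu₁]
    apply intervalIntegral.integral_nonneg hrc.2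
    intro t ht
    exact hqnn t ⟨le_trans hrc.1 ht.1, ht.2⟩
  have hu₁pos : ∀ r ∈ Ioo (0:ℝ) R, 0 < u₁ r := by
    intro r hrc
    rw [hu₁]
    apply intervalIntegral_pos_of_pos_on
    · apply ContinuousOn.intervalIntegrable
      rw [uIcc_of_le hrc.2.le]
      exact hqcon.mono (Icc_subset_Icc hrc.1.le le_rfl)
    · intro t ht
      exact hqpos t ⟨lt_trans hrc.1 ht.1, ht.2.le⟩
    · exact hrc.2
  -- key integrals
  set A : ℝ := ∫ r in (0:ℝ)..R, u₁ r * ω r with hA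
  set B : ℝ := ∫ r in (0:ℝ)..R, (u₁ r) ^ 2 * ω r with hB
  set V : ℝ := ∫ r in (0:ℝ)..R, ω r with hV
  have hu₁ωint : IntervalIntegrable (fun r => u₁ r * ω r) volume 0 R := by
    apply ContinuousOn.intervalIntegrable
    rw [uIcc_of_le hR']
    exact hu₁cont.mul hωc.continuousOn
  have hu₁sqint : IntervalIntegrable (fun r => (u₁ r)^2 * ω r) volume 0 R := by
    apply ContinuousOn.intervalIntegrable
    rw [uIcc_of_le hR']
    exact (hu₁cont.pow 2).mul hωc.continuousOn
  have hApos : 0 < A := by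
    apply intervalIntegral_pos_of_pos_on hu₁ωint _ hR
    intro t ht
    exact mul_pos (hu₁pos t ht) (hωpos t ⟨ht.1, ht.2.le⟩)
  have hBpos : 0 < B := by
    apply intervalIntegral_pos_of_pos_on hu₁sqint _ hR
    intro t ht
    exact mul_pos (pow_pos (hu₁pos t ht) 2) (hωpos t ⟨ht.1, ht.2.le⟩)
  have hVpos : 0 < V := by
    apply intervalIntegral_pos_of_pos_on (hωint 0 R) _ hR
    intro t ht
    exact hωpos t ⟨ht.1, ht.2.le⟩
  -- denominator and numerator of the Rayleigh quotient of f₀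
  have hD₀ : (∫ r in (0:ℝ)..R, (f₀ r) ^ 2 * ω r) = B := by
    rw [hB]
    apply intervalIntegral.integral_congr
    intro r hrc
    rw [uIcc_of_le hR'] at hrc
    show f₀ r ^ 2 * ω r = u₁ r ^ 2 * ω r
    rw [hf₀u r hrc]
  have hN₀eq : (∫ r in (0:ℝ)..R, (deriv f₀ r) ^ 2 * ω r) =
      ∫ r in (0:ℝ)..R, (q r) ^ 2 * ω r := by
    apply intervalIntegral.integral_congr
    intro r hrc
    rw [uIcc_of_le hR'] at hrc
    show (deriv f₀ r) ^ 2 * ω r = q r ^ 2 * ω r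
    rw [hf₀deriv]
    show (-qt r) ^ 2 * ω r = q r ^ 2 * ω r
    rw [neg_pow, hqteq r hrc]
    simp
  -- integration by parts: ∫ q² ω = ∫ u₁ ω
  have hq2ωint : IntervalIntegrable (fun r => (q r)^2 * ω r) volume 0 R := by
    apply ContinuousOn.intervalIntegrable
    rw [uIcc_of_le hR']
    exact (hqcon.pow 2).mul hωc.continuousOn
  have hIBP : (∫ r in (0:ℝ)..R, (q r) ^ 2 * ω r) = A := by
    have hu₁d : ∀ x ∈ Ioo (0:ℝ) R, HasDerivAt u₁ (-q x) x := by
      intro x hx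
      have hev : u₁ =ᶠ[nhds x] f₀ := by
        filter_upwards [Ioo_mem_nhds hx.1 hx.2] with t ht
        exact (hf₀u t ⟨ht.1.le, ht.2.le⟩).symm
      have h := (hf₀d x).congr_of_eventuallyEq hev
      rwa [hqteq x ⟨hx.1.le, hx.2.le⟩] at h
    have hΦd : ∀ x ∈ Ioo (0:ℝ) R,
        HasDerivAt (fun r => u₁ r * W r) (u₁ x * ω x - (q x)^2 * ω x) x := by
      intro x hx
      have h := (hu₁d x hx).mul (hWd x)
      have hωne : ω x ≠ 0 := (hωpos x ⟨hx.1, hx.2.le⟩).ne'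
      have hWx : W x = q x * ω x := by
        rw [hqW x]; field_simp
      have heq : -q x * W x + u₁ x * ω x = u₁ x * ω x - (q x)^2 * ω x := by
        rw [hWx]; ring
      rwa [heq] at h
    have hcontΦ : ContinuousOn (fun r => u₁ r * W r) (Icc (0:ℝ) R) :=
      hu₁cont.mul hWc.continuousOn
    have hgint : IntervalIntegrable (fun x => u₁ x * ω x - (q x)^2 * ω x) volume 0 R :=
      hu₁ωint.sub hq2ωint
    have hftc := intervalIntegral.integral_eq_sub_of_hasDeriv_right_of_le hR' hcontΦ
      (fun x hx => (hΦd x hx).hasDerivWithinAt) hgint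
    have hu₁R : u₁ R = 0 := by rw [hu₁]; simp
    have hW0 : W 0 = 0 := by rw [hWdef]; simp
    rw [hu₁R, hW0] at hftc
    simp only [zero_mul, mul_zero, sub_zero] at hftc
    rw [intervalIntegral.integral_sub hu₁ωint hq2ωint] at hftc
    rw [hA]
    linarith
  -- Cauchy-Schwarz : A^2 ≤ B * V
  have hCS : A ^ 2 ≤ B * V := by
    have hsqc : Continuous fun t => Real.sqrt (ω t) :=
      Real.continuous_sqrt.comp hωc
    have hcs := my_cs hR' (g := fun t => u₁ t * Real.sqrt (ω t))
      (h := fun t => Real.sqrt (ω t))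
      (hu₁cont.mul hsqc.continuousOn) hsqc.continuousOn
    have e1 : (∫ t in (0:ℝ)..R, (u₁ t * Real.sqrt (ω t)) * Real.sqrt (ω t)) = A := by
      rw [hA]
      apply intervalIntegral.integral_congr
      intro t ht
      rw [uIcc_of_le hR'] at ht
      show (u₁ t * Real.sqrt (ω t)) * Real.sqrt (ω t) = u₁ t * ω t
      rw [mul_assoc, Real.mul_self_sqrt (hωnn t ht)]
    have e2 : (∫ t in (0:ℝ)..R, (u₁ t * Real.sqrt (ω t)) ^ 2) = B := by
      rw [hB]
      apply intervalIntegral.integral_congr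
      intro t ht
      rw [uIcc_of_le hR'] at ht
      show (u₁ t * Real.sqrt (ω t)) ^ 2 = u₁ t ^ 2 * ω t
      rw [mul_pow, Real.sq_sqrt (hωnn t ht)]
    have e3 : (∫ t in (0:ℝ)..R, (Real.sqrt (ω t)) ^ 2) = V := by
      rw [hV]
      apply intervalIntegral.integral_congr
      intro t ht
      rw [uIcc_of_le hR'] at ht
      show (Real.sqrt (ω t)) ^ 2 = ω t
      rw [Real.sq_sqrt (hωnn t ht)]
    rw [e1, e2, e3] at hcs
    exact hcs
  refine ⟨B⁻¹ * (∫ r in (0:ℝ)..R, (q r) ^ 2 * ω r), ?_, ?_⟩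
  · rw [hS]
    refine ⟨f₀, hf₀cd, hf₀R, ?_, ?_⟩
    · rw [hD₀]; exact hBpos.ne'
    · rw [hD₀, hN₀eq, div_eq_inv_mul]
  · rw [hIBP]
    rw [mul_div_mul_left _ _ hc.ne']
    rw [inv_mul_eq_div, div_le_div_iff₀ hBpos hApos]
    nlinarith [hCS]

end Aux

/-- The first Dirichlet eigenvalue of the radial operator
`L f = f'' + (m-1)(w'/w) f'` on `[0,R]`, defined variationally via the Rayleigh
quotient with respect to the weighted measure `w^{m-1}(r) dr`. -/
noncomputable def firstDirichletEigenvalue (m : ℕ) (w : ℝ → ℝ) (R : ℝ) : ℝ :=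
  sInf {lam : ℝ | ∃ f : ℝ → ℝ, ContDiff ℝ 1 f ∧ f R = 0 ∧
    (∫ r in (0:ℝ)..R, (f r) ^ 2 * w r ^ (m - 1)) ≠ 0 ∧
    lam = (∫ r in (0:ℝ)..R, (deriv f r) ^ 2 * w r ^ (m - 1)) /
      (∫ r in (0:ℝ)..R, (f r) ^ 2 * w r ^ (m - 1))}

/-- `1/∫₀^R q_w ≤ λ₁(B^w_R) ≤ Vol(B^w_R)/A₁(B^w_R)`. -/
theorem stmt_10 (m : ℕ) (hm : 2 ≤ m) (R : ℝ) (hR : 0 < R)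
    (w : ℝ → ℝ) (hw : ContDiff ℝ (⊤ : ℕ∞) w) (hw0 : w 0 = 0) (hw1 : deriv w 0 = 1)
    (hwpos : ∀ r ∈ Set.Ioc (0:ℝ) R, 0 < w r)
    (c : ℝ) (hc : 0 < c)
    (q u₁ : ℝ → ℝ)
    (hq : ∀ t : ℝ, q t = (∫ s in (0:ℝ)..t, w s ^ (m - 1)) / w t ^ (m - 1))
    (hu₁ : ∀ r : ℝ, u₁ r = ∫ t in r..R, q t) :
    1 / (∫ t in (0:ℝ)..R, q t) ≤ firstDirichletEigenvalue m w R ∧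
      firstDirichletEigenvalue m w R ≤
        (c * ∫ r in (0:ℝ)..R, w r ^ (m - 1)) /
          (c * ∫ r in (0:ℝ)..R, u₁ r * w r ^ (m - 1)) := by
  have hR' : (0:ℝ) ≤ R := hR.le
  have hwc : Continuous w := hw.continuous
  have hwnn : ∀ r ∈ Icc (0:ℝ) R, 0 ≤ w r := by
    intro r hr
    rcases eq_or_lt_of_le hr.1 with h | h
    · simp [← h, hw0]
    · exact (hwpos r ⟨h, hr.2⟩).le
  have hωc : Continuous (fun r : ℝ => w r ^ (m - 1)) := hwc.pow _
  have hωnn : ∀ r ∈ Icc (0:ℝ) R, 0 ≤ w r ^ (m - 1) :=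
    fun r hr => pow_nonneg (hwnn r hr) _
  have hωpos : ∀ r ∈ Ioc (0:ℝ) R, 0 < w r ^ (m - 1) :=
    fun r hr => pow_pos (hwpos r hr) _
  have hωint : ∀ a b : ℝ, IntervalIntegrable (fun r : ℝ => w r ^ (m - 1))
      MeasureTheory.volume a b := fun a b => hωc.intervalIntegrable a b
  have hWd : ∀ r : ℝ, HasDerivAt (fun r : ℝ => ∫ t in (0:ℝ)..r, w t ^ (m - 1))
      (w r ^ (m - 1)) r := fun r =>
    intervalIntegral.integral_hasDerivAt_right (hωint 0 r)
      (hωc.stronglyMeasurableAtFilter _ _) hωc.continuousAt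
  have hWc : Continuous (fun r : ℝ => ∫ t in (0:ℝ)..r, w t ^ (m - 1)) :=
    continuous_iff_continuousAt.2 fun r => (hWd r).continuousAt
  have hWnn : ∀ r ∈ Icc (0:ℝ) R, 0 ≤ ∫ t in (0:ℝ)..r, w t ^ (m - 1) := by
    intro r hr
    exact intervalIntegral.integral_nonneg hr.1
      (fun t ht => hωnn t ⟨ht.1, ht.2.trans hr.2⟩)
  have hWpos : ∀ r ∈ Ioc (0:ℝ) R, 0 < ∫ t in (0:ℝ)..r, w t ^ (m - 1) := by
    intro r hr
    exact intervalIntegral_pos_of_pos_on (hωint 0 r)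
      (fun t ht => hωpos t ⟨ht.1, ht.2.le.trans hr.2⟩) hr.1
  have hqca : ∀ t : ℝ, w t ≠ 0 → ContinuousAt q t := by
    intro t ht
    have h1 : ContinuousAt
        (fun t : ℝ => (∫ s in (0:ℝ)..t, w s ^ (m - 1)) / w t ^ (m - 1)) t :=
      (hWc.continuousAt).div (hωc.continuousAt) (pow_ne_zero _ ht)
    exact h1.congr (by filter_upwards with s; rw [hq s])
  have hqnn : ∀ t ∈ Icc (0:ℝ) R, 0 ≤ q t := by
    intro t ht; rw [hq]
    exact div_nonneg (hWnn t ht) (hωnn t ht)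
  have hqpos : ∀ t ∈ Ioc (0:ℝ) R, 0 < q t := by
    intro t ht; rw [hq]
    exact div_pos (hWpos t ht) (hωpos t ht)
  have hq0 : ContinuousWithinAt q (Icc (0:ℝ) R) 0 :=
    aux_cwa m hm R hR w hw hw0 hw1 hwpos q _ rfl _ rfl hq hwnn hωint hqnn
  have hqcon : ContinuousOn q (Icc (0:ℝ) R) := by
    intro x hx
    rcases eq_or_lt_of_le hx.1 with h | h
    · rw [← h]; exact hq0
    · exact (hqca x (hwpos x ⟨h, hx.2⟩).ne').continuousWithinAt
  have hqint : IntervalIntegrable q MeasureTheory.volume 0 R := by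
    apply ContinuousOn.intervalIntegrable; rwa [uIcc_of_le hR']
  have hQpos : 0 < ∫ t in (0:ℝ)..R, q t :=
    intervalIntegral_pos_of_pos_on hqint
      (fun t ht => hqpos t ⟨ht.1, ht.2.le⟩) hR
  have hFDE : firstDirichletEigenvalue m w R = sInf
      {lam : ℝ | ∃ f : ℝ → ℝ, ContDiff ℝ 1 f ∧ f R = 0 ∧
        (∫ r in (0:ℝ)..R, (f r) ^ 2 * w r ^ (m - 1)) ≠ 0 ∧
        lam = (∫ r in (0:ℝ)..R, (deriv f r) ^ 2 * w r ^ (m - 1)) /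
          (∫ r in (0:ℝ)..R, (f r) ^ 2 * w r ^ (m - 1))} := rfl
  have hlow : ∀ lam ∈ {lam : ℝ | ∃ f : ℝ → ℝ, ContDiff ℝ 1 f ∧ f R = 0 ∧
      (∫ r in (0:ℝ)..R, (f r) ^ 2 * w r ^ (m - 1)) ≠ 0 ∧
      lam = (∫ r in (0:ℝ)..R, (deriv f r) ^ 2 * w r ^ (m - 1)) /
        (∫ r in (0:ℝ)..R, (f r) ^ 2 * w r ^ (m - 1))},
      1 / (∫ t in (0:ℝ)..R, q t) ≤ lam := by
    rintro lam ⟨f, hf, hfR, hD, rfl⟩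
    exact aux_lower m R hR w hwc hw0 hwpos q _ rfl hωc hωnn hωpos hωint _ rfl
      hWd hWc hWnn hq hqca hqcon hqnn hqint _ rfl hQpos f hf hfR hD
  obtain ⟨lam₀, hlam₀S, hlam₀le⟩ :=
    aux_upper m R hR w hwc hw0 hwpos c hc q u₁ _ rfl hωc hωnn hωpos hωint _ rfl
      hWd hWc hq hqca hqcon hqnn hqpos hu₁ _ rfl
  constructor
  · rw [hFDE]
    exact le_csInf ⟨lam₀, hlam₀S⟩ hlow
  · rw [hFDE]
    exact le_trans
      (csInf_le ⟨1 / (∫ t in (0:ℝ)..R, q t), fun lam hl => hlow lam hl⟩ hlam₀S)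
      hlam₀le
end

section
/- Let w be a model warping function and let λ₁ be the first Dirichlet eigenvalue of the radial operator f'' + (m−1)(w'/w)f' on [0,R]. If φ > 0 on [0,R) is a C² eigenfunction with φ(R) = 0 and φ'' + (m−1)(w'/w)φ' = −λφ for some λ, and if additionally some positive C² function ψ with ψ(R)=0 satisfies −(ψ'' + (m−1)(w'/w)ψ') / ψ ≡ λ on (0,R), then λ = λ₁. -/
set_option maxHeartbeats 1000000

open Set intervalIntegral

-- interior derivative facts for a C² function on Icc
lemma interior_derivs {R : ℝ} (hR : 0 < R) {u : ℝ → ℝ} (hu : ContDiffOn ℝ 2 u (Icc 0 R))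
    {x : ℝ} (hx : x ∈ Ioo 0 R) :
    HasDerivAt u (derivWithin u (Icc 0 R) x) x ∧
    HasDerivAt (derivWithin u (Icc 0 R)) (derivWithin (derivWithin u (Icc 0 R)) (Icc 0 R) x) x ∧
    deriv u x = derivWithin u (Icc 0 R) x ∧
    deriv (deriv u) x = derivWithin (derivWithin u (Icc 0 R)) (Icc 0 R) x := by
  set u₁ := derivWithin u (Icc 0 R) with hu₁def
  have hxIcc : x ∈ Icc (0:ℝ) R := Ioo_subset_Icc_self hx
  have hnhds : Icc (0:ℝ) R ∈ nhds x := Icc_mem_nhds hx.1 hx.2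
  have hu1 : ContDiffOn ℝ 1 u₁ (Icc 0 R) :=
    hu.derivWithin (uniqueDiffOn_Icc hR) (by norm_num)
  have hdu : HasDerivAt u (u₁ x) x :=
    ((hu.differentiableOn (by norm_num) x hxIcc).hasDerivWithinAt).hasDerivAt hnhds
  have hdu1 : HasDerivAt u₁ (derivWithin u₁ (Icc 0 R) x) x :=
    ((hu1.differentiableOn one_ne_zero x hxIcc).hasDerivWithinAt).hasDerivAt hnhds
  have h1 : deriv u x = u₁ x := hdu.deriv
  have heq : deriv u =ᶠ[nhds x] u₁ := by
    filter_upwards [Ioo_mem_nhds hx.1 hx.2] with y hy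
    have hynhds : Icc (0:ℝ) R ∈ nhds y := Icc_mem_nhds hy.1 hy.2
    exact (derivWithin_of_mem_nhds hynhds).symm
  have h2 : deriv (deriv u) x = derivWithin u₁ (Icc 0 R) x := by
    rw [heq.deriv_eq]; exact hdu1.deriv
  exact ⟨hdu, hdu1, h1, h2⟩

lemma ext_c1 {R : ℝ} (hR : 0 < R) {φ : ℝ → ℝ} (hφ : ContDiffOn ℝ 1 φ (Icc 0 R)) :
    ∃ Φ : ℝ → ℝ, ContDiff ℝ 1 Φ ∧ (∀ r ∈ Icc (0:ℝ) R, Φ r = φ r) ∧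
      (∀ r ∈ Icc (0:ℝ) R, deriv Φ r = derivWithin φ (Icc 0 R) r) := by
  set φ₁ : ℝ → ℝ := derivWithin φ (Icc 0 R) with hφ₁def
  set c : ℝ → ℝ := fun r => max 0 (min r R) with hcdef
  have hc_mem : ∀ r, c r ∈ Icc (0:ℝ) R := fun r =>
    ⟨le_max_left _ _, max_le hR.le (min_le_right _ _)⟩
  have hc_eq : ∀ r ∈ Icc (0:ℝ) R, c r = r := by
    intro r hr
    simp [hcdef, min_eq_left hr.2, max_eq_right hr.1]
  set Φ : ℝ → ℝ := fun r => φ (c r) + φ₁ 0 * min r 0 + φ₁ R * max (r - R) 0 with hΦdef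
  have hΦ_eqIcc : ∀ r ∈ Icc (0:ℝ) R, Φ r = φ r := by
    intro r hr
    simp [hΦdef, hc_eq r hr, min_eq_right hr.1, max_eq_right (by linarith [hr.2] : r - R ≤ 0)]
  have hΦ_eqIic : ∀ r ∈ Iic (0:ℝ), Φ r = φ 0 + φ₁ 0 * r := by
    intro r hr
    simp only [mem_Iic] at hr
    have h1 : min r R = r := min_eq_left (by linarith)
    have h2 : max (0:ℝ) r = 0 := max_eq_left (by linarith)
    have h3 : min r 0 = r := min_eq_left hr
    have h4 : max (r - R) 0 = 0 := max_eq_right (by linarith)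
    simp [hΦdef, hcdef, h1, h2, h3, h4]
  have hΦ_eqIci : ∀ r ∈ Ici R, Φ r = φ R + φ₁ R * (r - R) := by
    intro r hr
    simp only [mem_Ici] at hr
    have h1 : c r = R := by
      simp [hcdef, min_eq_right hr, max_eq_right hR.le]
    have h3 : min r 0 = 0 := min_eq_right (by linarith)
    have h4 : max (r - R) 0 = r - R := max_eq_left (by linarith)
    simp [h1, h3, h4, hΦdef]
  have hdiffOn : DifferentiableOn ℝ φ (Icc 0 R) := hφ.differentiableOn one_ne_zero
  have hderivWithin : ∀ r ∈ Icc (0:ℝ) R, HasDerivWithinAt φ (φ₁ r) (Icc 0 R) r := by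
    intro r hr
    exact (hdiffOn r hr).hasDerivWithinAt
  -- linear pieces
  have hlin0 : ∀ x : ℝ, HasDerivAt (fun r => φ 0 + φ₁ 0 * r) (φ₁ 0) x := by
    intro x
    simpa using ((hasDerivAt_id x).const_mul (φ₁ 0)).const_add (φ 0)
  have hlinR : ∀ x : ℝ, HasDerivAt (fun r => φ R + φ₁ R * (r - R)) (φ₁ R) x := by
    intro x
    have : HasDerivAt (fun r : ℝ => r - R) 1 x := by
      simpa using (hasDerivAt_id x).sub_const R
    simpa using (this.const_mul (φ₁ R)).const_add (φ R)
  have hD : ∀ r, HasDerivAt Φ (φ₁ (c r)) r := by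
    intro r
    rcases lt_trichotomy r 0 with hr0 | rfl | hr0
    · have hc : c r = 0 := by
        simp [hcdef, min_eq_left (by linarith : r ≤ R), max_eq_left (by linarith : r ≤ 0)]
      rw [hc]
      refine (hlin0 r).congr_of_eventuallyEq ?_
      filter_upwards [Iio_mem_nhds hr0] with x hx
      exact hΦ_eqIic x (mem_Iic.2 hx.le)
    · have hc : c 0 = 0 := hc_eq 0 ⟨le_refl 0, hR.le⟩
      rw [hc]
      have hA : HasDerivWithinAt Φ (φ₁ 0) (Iic 0) 0 := by
        refine ((hlin0 0).hasDerivWithinAt).congr hΦ_eqIic (hΦ_eqIic 0 (mem_Iic.2 le_rfl))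
      have hB : HasDerivWithinAt Φ (φ₁ 0) (Icc 0 R) 0 := by
        refine (hderivWithin 0 ⟨le_rfl, hR.le⟩).congr hΦ_eqIcc (hΦ_eqIcc 0 ⟨le_rfl, hR.le⟩)
      refine (hA.union hB).hasDerivAt ?_
      refine Filter.mem_of_superset (Iio_mem_nhds hR) ?_
      intro x hx
      rcases le_or_gt x 0 with h | h
      · exact Or.inl h
      · exact Or.inr ⟨h.le, le_of_lt hx⟩
    rcases lt_trichotomy r R with hrR | rfl | hrR
    · have hc : c r = r := hc_eq r ⟨hr0.le, hrR.le⟩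
      rw [hc]
      have : HasDerivAt φ (φ₁ r) r := by
        refine (hderivWithin r ⟨hr0.le, hrR.le⟩).hasDerivAt ?_
        exact Icc_mem_nhds hr0 hrR
      refine this.congr_of_eventuallyEq ?_
      filter_upwards [Ioo_mem_nhds hr0 hrR] with x hx
      exact hΦ_eqIcc x ⟨hx.1.le, hx.2.le⟩
    · have hc : c r = r := hc_eq r ⟨hr0.le, le_rfl⟩
      rw [hc]
      have hA : HasDerivWithinAt Φ (φ₁ r) (Icc 0 r) r := by
        refine (hderivWithin r ⟨hr0.le, le_rfl⟩).congr hΦ_eqIcc (hΦ_eqIcc r ⟨hr0.le, le_rfl⟩)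
      have hB : HasDerivWithinAt Φ (φ₁ r) (Ici r) r := by
        refine ((hlinR r).hasDerivWithinAt).congr hΦ_eqIci (hΦ_eqIci r (mem_Ici.2 le_rfl))
      refine (hA.union hB).hasDerivAt ?_
      refine Filter.mem_of_superset (Ioi_mem_nhds hr0) ?_
      intro x hx
      rcases le_or_gt x r with h | h
      · exact Or.inl ⟨le_of_lt hx, h⟩
      · exact Or.inr h.le
    · have hc : c r = R := by
        simp [hcdef, min_eq_right hrR.le, max_eq_right hR.le]
      rw [hc]
      refine (hlinR r).congr_of_eventuallyEq ?_
      filter_upwards [Ioi_mem_nhds hrR] with x hx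
      exact hΦ_eqIci x (mem_Ici.2 hx.le)
  have hφ₁cont : ContinuousOn φ₁ (Icc 0 R) := by
    have h0 : ContDiffOn ℝ 0 φ₁ (Icc 0 R) := hφ.derivWithin (uniqueDiffOn_Icc hR) (by norm_num)
    exact h0.continuousOn
  have hc_cont : Continuous c := continuous_const.max (continuous_id.min continuous_const)
  have hDcont : Continuous (fun r => φ₁ (c r)) :=
    hφ₁cont.comp_continuous hc_cont hc_mem
  have hderivΦ : deriv Φ = fun r => φ₁ (c r) := funext fun r => (hD r).deriv
  refine ⟨Φ, ?_, hΦ_eqIcc, ?_⟩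
  · rw [contDiff_one_iff_deriv]
    exact ⟨fun r => (hD r).differentiableAt, by rw [hderivΦ]; exact hDcont⟩
  · intro r hr
    rw [hderivΦ]
    simp only [hc_eq r hr]

theorem stmt_19' (n : ℕ) (R : ℝ) (hR : 0 < R)
    (w : ℝ → ℝ) (hw : ContDiff ℝ (⊤ : ℕ∞) w) (hw0 : w 0 = 0)
    (hwpos : ∀ r ∈ Set.Ioc (0:ℝ) R, 0 < w r)
    (lam : ℝ) (φ ψ : ℝ → ℝ)
    (hφ : ContDiffOn ℝ 2 φ (Set.Icc 0 R))
    (hφpos : ∀ r ∈ Set.Ico (0:ℝ) R, 0 < φ r) (hφR : φ R = 0)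
    (hφode : ∀ r ∈ Set.Ioo (0:ℝ) R,
      deriv (deriv φ) r + ((n : ℝ) + 1) * (deriv w r / w r) * deriv φ r = -lam * φ r)
    (hψ : ContDiffOn ℝ 2 ψ (Set.Icc 0 R))
    (hψpos : ∀ r ∈ Set.Ico (0:ℝ) R, 0 < ψ r) (hψR : ψ R = 0)
    (hψode' : ∀ r ∈ Set.Ioo (0:ℝ) R,
      deriv (deriv ψ) r + ((n : ℝ) + 1) * (deriv w r / w r) * deriv ψ r = -lam * ψ r) :
    lam = sInf {l : ℝ | ∃ f : ℝ → ℝ, ContDiff ℝ 1 f ∧ f R = 0 ∧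
      (∫ r in (0:ℝ)..R, (f r) ^ 2 * w r ^ (n + 1)) ≠ 0 ∧
      l = (∫ r in (0:ℝ)..R, (deriv f r) ^ 2 * w r ^ (n + 1)) /
        (∫ r in (0:ℝ)..R, (f r) ^ 2 * w r ^ (n + 1))} := by
  have hIccIoo : Ioo (0:ℝ) R ⊆ Icc 0 R := Ioo_subset_Icc_self
  set W : ℝ → ℝ := fun r => w r ^ (n + 1) with hWdef
  have hWcont : Continuous W := (hw.continuous).pow _
  have hW0 : W 0 = 0 := by simp [hWdef, hw0]
  have hwnn : ∀ r ∈ Icc (0:ℝ) R, 0 ≤ w r := by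
    intro r hr
    rcases eq_or_lt_of_le hr.1 with h | h
    · rw [← h, hw0]
    · exact (hwpos r ⟨h, hr.2⟩).le
  have hWnn : ∀ r ∈ Icc (0:ℝ) R, 0 ≤ W r := fun r hr => pow_nonneg (hwnn r hr) _
  have hWpos : ∀ r ∈ Ioc (0:ℝ) R, 0 < W r := fun r hr => pow_pos (hwpos r hr) _
  have hwd : ∀ x, HasDerivAt w (deriv w x) x := fun x =>
    (hw.differentiable (by simp) x).hasDerivAt
  have hWd : ∀ x, HasDerivAt W (((n:ℝ) + 1) * w x ^ n * deriv w x) x := by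
    intro x
    have := (hwd x).pow (n + 1)
    simp at this; exact this
  set φ₁ := derivWithin φ (Icc 0 R) with hφ₁def
  set φ₂ := derivWithin φ₁ (Icc 0 R) with hφ₂def
  set ψ₁ := derivWithin ψ (Icc 0 R) with hψ₁def
  set ψ₂ := derivWithin ψ₁ (Icc 0 R) with hψ₂def
  have hφ₁cont : ContinuousOn φ₁ (Icc 0 R) := by
    have h1 : ContDiffOn ℝ 1 φ₁ (Icc 0 R) := hφ.derivWithin (uniqueDiffOn_Icc hR) (by norm_num)
    exact h1.continuousOn
  have hψ₁cont : ContinuousOn ψ₁ (Icc 0 R) := by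
    have h1 : ContDiffOn ℝ 1 ψ₁ (Icc 0 R) := hψ.derivWithin (uniqueDiffOn_Icc hR) (by norm_num)
    exact h1.continuousOn
  -- ODEs in terms of within-derivatives
  have hφODE : ∀ x ∈ Ioo (0:ℝ) R, φ₂ x = -lam * φ x - ((n:ℝ) + 1) * (deriv w x / w x) * φ₁ x := by
    intro x hx
    obtain ⟨_, _, h1, h2⟩ := interior_derivs hR hφ hx
    have := hφode x hx
    rw [h1, h2] at this
    linarith
  have hψODE : ∀ x ∈ Ioo (0:ℝ) R, ψ₂ x = -lam * ψ x - ((n:ℝ) + 1) * (deriv w x / w x) * ψ₁ x := by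
    intro x hx
    obtain ⟨_, _, h1, h2⟩ := interior_derivs hR hψ hx
    have := hψode' x hx
    rw [h1, h2] at this
    linarith
  -- PART A : ∫ φ₁² W = lam * ∫ φ² W
  have hφkey : (∫ x in (0:ℝ)..R, (φ₁ x) ^ 2 * W x) = lam * ∫ x in (0:ℝ)..R, (φ x) ^ 2 * W x := by
    set g : ℝ → ℝ := fun x => φ x * φ₁ x * W x with hgdef
    set P : ℝ → ℝ := fun x => (φ₁ x) ^ 2 * W x - lam * ((φ x) ^ 2 * W x) with hPdef
    have hgcont : ContinuousOn g (Icc 0 R) :=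
      (hφ.continuousOn.mul hφ₁cont).mul hWcont.continuousOn
    have hgderiv : ∀ x ∈ Ioo (0:ℝ) R, HasDerivWithinAt g (P x) (Ioi x) x := by
      intro x hx
      obtain ⟨hdφ, hdφ₁, _, _⟩ := interior_derivs hR hφ hx
      have hwne : w x ≠ 0 := (hwpos x ⟨hx.1, hx.2.le⟩).ne'
      have hD := (hdφ.mul hdφ₁).mul (hWd x)
      have heq : (derivWithin φ (Icc 0 R) x * φ₁ x + φ x * derivWithin φ₁ (Icc 0 R) x) * W x
          + (φ x * φ₁ x) * (((n:ℝ)+1) * w x ^ n * deriv w x) = P x := by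
        rw [show derivWithin φ (Icc 0 R) x = φ₁ x from rfl,
          show derivWithin φ₁ (Icc 0 R) x = φ₂ x from rfl, hφODE x hx]
        simp only [hPdef, hWdef]
        field_simp
        ring
      have hD := hD.congr_deriv heq
      exact hD.hasDerivWithinAt
    have hPint : IntervalIntegrable P MeasureTheory.volume 0 R := by
      apply ContinuousOn.intervalIntegrable
      rw [uIcc_of_le hR.le]
      exact ((hφ₁cont.pow 2).mul hWcont.continuousOn).sub
        (continuousOn_const.mul ((hφ.continuousOn.pow 2).mul hWcont.continuousOn))
    have hFTC := intervalIntegral.integral_eq_sub_of_hasDeriv_right_of_le hR.le hgcont hgderiv hPint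
    have hgR : g R = 0 := by simp [hgdef, hφR]
    have hg0 : g 0 = 0 := by simp [hgdef, hW0]
    rw [hgR, hg0, sub_zero] at hFTC
    have h1 : IntervalIntegrable (fun x => (φ₁ x)^2 * W x) MeasureTheory.volume 0 R := by
      apply ContinuousOn.intervalIntegrable; rw [uIcc_of_le hR.le]
      exact (hφ₁cont.pow 2).mul hWcont.continuousOn
    have h2 : IntervalIntegrable (fun x => (φ x)^2 * W x) MeasureTheory.volume 0 R := by
      apply ContinuousOn.intervalIntegrable; rw [uIcc_of_le hR.le]
      exact (hφ.continuousOn.pow 2).mul hWcont.continuousOn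
    have hsplit : (∫ x in (0:ℝ)..R, P x)
        = (∫ x in (0:ℝ)..R, (φ₁ x)^2 * W x) - lam * ∫ x in (0:ℝ)..R, (φ x)^2 * W x := by
      calc (∫ x in (0:ℝ)..R, P x)
          = ∫ x in (0:ℝ)..R, ((φ₁ x)^2 * W x - lam * ((φ x)^2 * W x)) := rfl
        _ = (∫ x in (0:ℝ)..R, (φ₁ x)^2 * W x) - ∫ x in (0:ℝ)..R, lam * ((φ x)^2 * W x) :=
            intervalIntegral.integral_sub h1 (h2.const_mul lam)
        _ = (∫ x in (0:ℝ)..R, (φ₁ x)^2 * W x) - lam * ∫ x in (0:ℝ)..R, (φ x)^2 * W x := by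
            rw [intervalIntegral.integral_const_mul]
    linarith [hsplit, hFTC]
  -- PART B : Barta lower bound
  have hψ₁RIcc : HasDerivWithinAt ψ (ψ₁ R) (Icc 0 R) R :=
    (hψ.differentiableOn (by norm_num) R (right_mem_Icc.2 hR.le)).hasDerivWithinAt
  have hψslope : Filter.Tendsto (fun x => ψ x / (x - R)) (nhdsWithin R (Iio R)) (nhds (ψ₁ R)) := by
    have h1 := hasDerivWithinAt_iff_tendsto_slope.1 hψ₁RIcc
    have h2 : nhdsWithin R (Iio R) ≤ nhdsWithin R (Icc 0 R \ {R}) := by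
      rw [← nhdsWithin_Ioo_eq_nhdsLT hR]
      exact nhdsWithin_mono R (fun y hy => ⟨hIccIoo hy, ne_of_lt hy.2⟩)
    refine (h1.mono_left h2).congr' ?_
    filter_upwards [self_mem_nhdsWithin] with y _
    rw [slope_def_field, hψR, sub_zero]
  have hψ₁Rle : ψ₁ R ≤ 0 := by
    refine le_of_tendsto hψslope ?_
    filter_upwards [Ioo_mem_nhdsLT_of_mem (right_mem_Ioc.2 hR)] with x hx
    exact div_nonpos_of_nonneg_of_nonpos (hψpos x ⟨hx.1.le, hx.2⟩).le (by linarith [hx.2])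
  have hψ₁Rneg : ψ₁ R < 0 := by
    rcases lt_or_eq_of_le hψ₁Rle with h | hzero
    · exact h
    exfalso
    set r₀ := R / 2 with hr₀def
    have hr₀ : 0 < r₀ := by positivity
    have hr₀R : r₀ < R := by
      rw [hr₀def]; linarith
    have hsubI : Icc r₀ R ⊆ Icc 0 R := Icc_subset_Icc (by linarith) le_rfl
    set c : ℝ → ℝ := fun x => ((n:ℝ)+1) * (deriv w x / w x) with hcdef
    have hwne : ∀ x ∈ Icc r₀ R, w x ≠ 0 := fun x hx =>
      (hwpos x ⟨lt_of_lt_of_le hr₀ hx.1, hx.2⟩).ne'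
    have hccont : ContinuousOn c (Icc r₀ R) :=
      continuousOn_const.mul (((hw.continuous_deriv (by simp)).continuousOn).div
        hw.continuous.continuousOn hwne)
    obtain ⟨K, hK⟩ := IsCompact.exists_bound_of_continuousOn isCompact_Icc hccont
    have hK0 : 0 ≤ K := le_trans (norm_nonneg _) (hK R (right_mem_Icc.2 hr₀R.le))
    set C := 1 + |lam| + 2 * K with hCdef
    set G : ℝ → ℝ := fun x => (ψ x ^ 2 + ψ₁ x ^ 2) * Real.exp (C * x) with hGdef
    have hGcont : ContinuousOn G (Icc r₀ R) :=
      (((hψ.continuousOn.mono hsubI).pow 2).add ((hψ₁cont.mono hsubI).pow 2)).mul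
        ((Real.continuous_exp.comp (continuous_const.mul continuous_id)).continuousOn)
    have hGderiv : ∀ x ∈ Ioo r₀ R, HasDerivAt G
        (((2:ℕ) * ψ x ^ 1 * ψ₁ x + (2:ℕ) * ψ₁ x ^ 1 * ψ₂ x) * Real.exp (C * x)
          + (ψ x ^ 2 + ψ₁ x ^ 2) * (C * Real.exp (C * x))) x := by
      intro x hx
      have hx' : x ∈ Ioo (0:ℝ) R := ⟨lt_trans hr₀ hx.1, hx.2⟩
      obtain ⟨hdψ, hdψ₁, _, _⟩ := interior_derivs hR hψ hx'
      have he : HasDerivAt (fun y => Real.exp (C * y)) (C * Real.exp (C * x)) x := by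
        have hCx : HasDerivAt (fun y : ℝ => C * y) C x := by
          simpa using (hasDerivAt_id x).const_mul C
        simpa [mul_comm] using hCx.exp
      exact ((hdψ.pow 2).add (hdψ₁.pow 2)).mul he
    have hmono : MonotoneOn G (Icc r₀ R) := by
      apply monotoneOn_of_deriv_nonneg (convex_Icc _ _) hGcont
      · intro x hx
        rw [interior_Icc] at hx
        exact ((hGderiv x hx).differentiableAt).differentiableWithinAt
      · intro x hx
        rw [interior_Icc] at hx
        rw [(hGderiv x hx).deriv]
        have hx' : x ∈ Ioo (0:ℝ) R := ⟨lt_trans hr₀ hx.1, hx.2⟩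
        have hODE := hψODE x hx'
        have hcb := hK x (Ioo_subset_Icc_self hx)
        rw [Real.norm_eq_abs] at hcb
        obtain ⟨hc1, hc2⟩ := abs_le.1 hcb
        have hexp : 0 < Real.exp (C * x) := Real.exp_pos _
        have hODE' : ψ₂ x = -lam * ψ x - c x * ψ₁ x := hODE
        rw [hODE']
        have hl1 : -|lam| ≤ lam := neg_abs_le lam
        have hl2 : lam ≤ |lam| := le_abs_self lam
        have key : 0 ≤ 2 * ψ x * ψ₁ x + 2 * ψ₁ x * (-lam * ψ x - c x * ψ₁ x)
            + (ψ x ^ 2 + ψ₁ x ^ 2) * C := by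
          rw [hCdef]
          nlinarith [sq_nonneg (ψ x + ψ₁ x), sq_nonneg (ψ x - ψ₁ x),
            mul_nonneg (sub_nonneg.2 hl2) (sq_nonneg (ψ x + ψ₁ x)),
            mul_nonneg (by linarith : (0:ℝ) ≤ |lam| + lam) (sq_nonneg (ψ x - ψ₁ x)),
            mul_nonneg (sub_nonneg.2 hc2) (sq_nonneg (ψ₁ x)),
            mul_nonneg hK0 (sq_nonneg (ψ x))]
        have hrw : ((2:ℕ) * ψ x ^ 1 * ψ₁ x + (2:ℕ) * ψ₁ x ^ 1 * (-lam * ψ x - c x * ψ₁ x)) * Real.exp (C * x)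
              + (ψ x ^ 2 + ψ₁ x ^ 2) * (C * Real.exp (C * x))
            = (2 * ψ x * ψ₁ x + 2 * ψ₁ x * (-lam * ψ x - c x * ψ₁ x)
              + (ψ x ^ 2 + ψ₁ x ^ 2) * C) * Real.exp (C * x) := by
          push_cast
          ring
        rw [hrw]
        exact mul_nonneg key hexp.le
    have hle := hmono (left_mem_Icc.2 hr₀R.le) (right_mem_Icc.2 hr₀R.le) hr₀R.le
    have hGR : G R = 0 := by
      simp [hGdef, hψR, hzero]
    rw [hGR] at hle
    have hψr₀ : 0 < ψ r₀ := hψpos r₀ ⟨hr₀.le, hr₀R⟩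
    have hexp : 0 < Real.exp (C * r₀) := Real.exp_pos _
    have : 0 < G r₀ := by
      apply mul_pos _ hexp
      nlinarith [sq_nonneg (ψ₁ r₀)]
    linarith
  have hBarta : ∀ f : ℝ → ℝ, ContDiff ℝ 1 f → f R = 0 →
      lam * (∫ x in (0:ℝ)..R, (f x) ^ 2 * W x) ≤ ∫ x in (0:ℝ)..R, (deriv f x) ^ 2 * W x := by
    intro f hf hfR
    set P : ℝ → ℝ := fun x => (deriv f x)^2 * W x - lam * ((f x)^2 * W x) with hPdef
    have hfc : Continuous f := hf.continuous
    have hf'c : Continuous (deriv f) := hf.continuous_deriv le_rfl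
    have hPc : Continuous P :=
      ((hf'c.pow 2).mul hWcont).sub (continuous_const.mul ((hfc.pow 2).mul hWcont))
    set h : ℝ → ℝ := fun x => (f x)^2 * (ψ₁ x / ψ x) * W x with hhdef
    have hψne : ∀ x ∈ Ico (0:ℝ) R, ψ x ≠ 0 := fun x hx => (hψpos x hx).ne'
    have hmain : ∀ t ∈ Ioo (0:ℝ) R, h t ≤ ∫ x in (0:ℝ)..t, P x := by
      intro t ht
      set Q : ℝ → ℝ := fun x => (deriv f x - f x * (ψ₁ x / ψ x))^2 * W x with hQdef
      have hsub : Icc (0:ℝ) t ⊆ Icc 0 R := Icc_subset_Icc le_rfl ht.2.le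
      have hsub' : Icc (0:ℝ) t ⊆ Ico 0 R := fun x hx => ⟨hx.1, lt_of_le_of_lt hx.2 ht.2⟩
      have hratio : ContinuousOn (fun x => ψ₁ x / ψ x) (Icc 0 t) :=
        (hψ₁cont.mono hsub).div (hψ.continuousOn.mono hsub) (fun x hx => hψne x (hsub' hx))
      have hQcont : ContinuousOn Q (Icc 0 t) :=
        ((hf'c.continuousOn.sub (hfc.continuousOn.mul hratio)).pow 2).mul hWcont.continuousOn
      have hhcont : ContinuousOn h (Icc 0 t) :=
        ((hfc.continuousOn.pow 2).mul hratio).mul hWcont.continuousOn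
      have hhderiv : ∀ x ∈ Ioo (0:ℝ) t, HasDerivWithinAt h (P x - Q x) (Ioi x) x := by
        intro x hx
        have hx' : x ∈ Ioo (0:ℝ) R := ⟨hx.1, lt_trans hx.2 ht.2⟩
        obtain ⟨hdψ, hdψ₁, _, _⟩ := interior_derivs hR hψ hx'
        have hψxne : ψ x ≠ 0 := hψne x ⟨hx'.1.le, hx'.2⟩
        have hwxne : w x ≠ 0 := (hwpos x ⟨hx'.1, hx'.2.le⟩).ne'
        have hdf : HasDerivAt f (deriv f x) x := (hf.differentiable one_ne_zero x).hasDerivAt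
        have hD := ((hdf.pow 2).mul
          ((show HasDerivAt ψ₁ (ψ₂ x) x from hdψ₁).div
            (show HasDerivAt ψ (ψ₁ x) x from hdψ) hψxne)).mul (hWd x)
        have heq : ((2:ℕ) * f x ^ 1 * deriv f x * (ψ₁ x / ψ x)
              + f x ^ 2 * ((ψ₂ x * ψ x - ψ₁ x * ψ₁ x) / ψ x ^ 2)) * W x
              + (f x ^ 2 * (ψ₁ x / ψ x)) * (((n:ℝ)+1) * w x ^ n * deriv w x) = P x - Q x := by
          rw [hψODE x hx']
          simp only [hPdef, hQdef, hWdef]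
          push_cast
          field_simp
          ring
        have hD := hD.congr_deriv heq
        exact hD.hasDerivWithinAt
      have hPQint : IntervalIntegrable (fun x => P x - Q x) MeasureTheory.volume 0 t := by
        apply ContinuousOn.intervalIntegrable
        rw [uIcc_of_le ht.1.le]
        exact hPc.continuousOn.sub hQcont
      have hFTC := intervalIntegral.integral_eq_sub_of_hasDeriv_right_of_le
        ht.1.le hhcont hhderiv hPQint
      have hh0 : h 0 = 0 := by simp [hhdef, hW0]
      rw [hh0, sub_zero] at hFTC
      have hQint : IntervalIntegrable Q MeasureTheory.volume 0 t := by
        apply ContinuousOn.intervalIntegrable; rw [uIcc_of_le ht.1.le]; exact hQcont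
      have hPint : IntervalIntegrable P MeasureTheory.volume 0 t := hPc.intervalIntegrable 0 t
      have hQnn : 0 ≤ ∫ x in (0:ℝ)..t, Q x := by
        apply intervalIntegral.integral_nonneg ht.1.le
        intro u hu
        exact mul_nonneg (sq_nonneg _) (hWnn u (hsub hu))
      have hsplit : (∫ x in (0:ℝ)..t, (P x - Q x))
          = (∫ x in (0:ℝ)..t, P x) - ∫ x in (0:ℝ)..t, Q x :=
        intervalIntegral.integral_sub hPint hQint
      linarith [hFTC, hsplit, hQnn]
    have hT : Filter.Tendsto (fun t => ∫ x in (0:ℝ)..t, P x) (nhdsWithin R (Iio R))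
        (nhds (∫ x in (0:ℝ)..R, P x)) := by
      have := (intervalIntegral.continuous_primitive (μ := MeasureTheory.volume)
        (fun a b => hPc.intervalIntegrable a b) 0).tendsto R
      exact this.mono_left nhdsWithin_le_nhds
    have hfslope : Filter.Tendsto (fun x => f x / (x - R)) (nhdsWithin R (Iio R))
        (nhds (deriv f R)) := by
      have hd : HasDerivAt f (deriv f R) R := (hf.differentiable one_ne_zero R).hasDerivAt
      have h1 := hasDerivAt_iff_tendsto_slope.1 hd
      have h2 : nhdsWithin R (Iio R) ≤ nhdsWithin R ({R}ᶜ) :=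
        nhdsWithin_mono R (fun y hy => ne_of_lt hy)
      refine (h1.mono_left h2).congr' ?_
      filter_upwards [self_mem_nhdsWithin] with y _
      rw [slope_def_field, hfR, sub_zero]
    have hsubt : Filter.Tendsto (fun x : ℝ => x - R) (nhdsWithin R (Iio R)) (nhds 0) := by
      have h0 : Continuous (fun x : ℝ => x - R) := continuous_id.sub continuous_const
      have h1 := (h0.tendsto R).mono_left (nhdsWithin_le_nhds (s := Iio R))
      simpa using h1
    have hBlim : Filter.Tendsto (fun x => (x - R) / (ψ x / (x - R))) (nhdsWithin R (Iio R))
        (nhds 0) := by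
      have := hsubt.div hψslope hψ₁Rneg.ne
      rw [zero_div] at this; exact this
    have hClim : Filter.Tendsto (fun x => ψ₁ x * W x) (nhdsWithin R (Iio R))
        (nhds (ψ₁ R * W R)) := by
      have h1 : Filter.Tendsto ψ₁ (nhdsWithin R (Iio R)) (nhds (ψ₁ R)) := by
        have h2 := (hψ₁cont R (right_mem_Icc.2 hR.le)).tendsto
        refine h2.mono_left ?_
        rw [← nhdsWithin_Ioo_eq_nhdsLT hR]
        exact nhdsWithin_mono R hIccIoo
      exact h1.mul ((hWcont.tendsto R).mono_left nhdsWithin_le_nhds)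
    have hhlim : Filter.Tendsto h (nhdsWithin R (Iio R)) (nhds 0) := by
      have hall := ((hfslope.pow 2).mul hBlim).mul hClim
      rw [show (deriv f R)^2 * 0 * (ψ₁ R * W R) = 0 by ring] at hall
      refine hall.congr' ?_
      filter_upwards [Ioo_mem_nhdsLT_of_mem (right_mem_Ioc.2 hR)] with x hx
      have hψxne : ψ x ≠ 0 := (hψpos x ⟨hx.1.le, hx.2⟩).ne'
      have hxne : x - R ≠ 0 := sub_ne_zero.2 (ne_of_lt hx.2)
      simp only [hhdef]
      field_simp [hψxne, hxne]
    have hfinal : 0 ≤ ∫ x in (0:ℝ)..R, P x := by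
      have hev : ∀ᶠ t in nhdsWithin R (Iio R), h t ≤ ∫ x in (0:ℝ)..t, P x := by
        filter_upwards [Ioo_mem_nhdsLT_of_mem (right_mem_Ioc.2 hR)] with t ht
        exact hmain t ht
      exact le_of_tendsto_of_tendsto hhlim hT hev
    have h1 : IntervalIntegrable (fun x => (deriv f x)^2 * W x) MeasureTheory.volume 0 R :=
      ((hf'c.pow 2).mul hWcont).intervalIntegrable 0 R
    have h2 : IntervalIntegrable (fun x => (f x)^2 * W x) MeasureTheory.volume 0 R :=
      ((hfc.pow 2).mul hWcont).intervalIntegrable 0 R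
    have hsplit : (∫ x in (0:ℝ)..R, P x)
        = (∫ x in (0:ℝ)..R, (deriv f x)^2 * W x) - lam * ∫ x in (0:ℝ)..R, (f x)^2 * W x := by
      calc (∫ x in (0:ℝ)..R, P x)
          = (∫ x in (0:ℝ)..R, (deriv f x)^2 * W x) - ∫ x in (0:ℝ)..R, lam * ((f x)^2 * W x) :=
            intervalIntegral.integral_sub h1 (h2.const_mul lam)
        _ = _ := by rw [intervalIntegral.integral_const_mul]
    linarith
  -- Conclusion
  obtain ⟨Φ, hΦc1, hΦeq, hΦd⟩ := ext_c1 hR (hφ.of_le (by norm_num))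
  have hIcc_uIcc : uIcc (0:ℝ) R = Icc 0 R := uIcc_of_le hR.le
  have hDint : (∫ r in (0:ℝ)..R, (Φ r)^2 * W r) = ∫ r in (0:ℝ)..R, (φ r)^2 * W r := by
    apply intervalIntegral.integral_congr
    intro x hx
    rw [hIcc_uIcc] at hx
    show Φ x ^ 2 * W x = φ x ^ 2 * W x
    rw [hΦeq x hx]
  have hNint : (∫ r in (0:ℝ)..R, (deriv Φ r)^2 * W r) = ∫ r in (0:ℝ)..R, (φ₁ r)^2 * W r := by
    apply intervalIntegral.integral_congr
    intro x hx
    rw [hIcc_uIcc] at hx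
    show deriv Φ x ^ 2 * W x = φ₁ x ^ 2 * W x
    rw [hΦd x hx]
  have hDpos : 0 < ∫ r in (0:ℝ)..R, (φ r)^2 * W r := by
    apply intervalIntegral.intervalIntegral_pos_of_pos_on
    · apply ContinuousOn.intervalIntegrable
      rw [hIcc_uIcc]
      exact (hφ.continuousOn.pow 2).mul hWcont.continuousOn
    · intro x hx
      exact mul_pos (pow_pos (hφpos x ⟨hx.1.le, hx.2⟩) 2) (hWpos x ⟨hx.1, hx.2.le⟩)
    · exact hR
  have hmem : lam ∈ {l : ℝ | ∃ f : ℝ → ℝ, ContDiff ℝ 1 f ∧ f R = 0 ∧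
      (∫ r in (0:ℝ)..R, (f r) ^ 2 * W r) ≠ 0 ∧
      l = (∫ r in (0:ℝ)..R, (deriv f r) ^ 2 * W r) /
        (∫ r in (0:ℝ)..R, (f r) ^ 2 * W r)} := by
    refine ⟨Φ, hΦc1, by rw [hΦeq R (right_mem_Icc.2 hR.le)]; exact hφR, ?_, ?_⟩
    · rw [hDint]; exact hDpos.ne'
    · rw [hDint, hNint, hφkey]
      field_simp
  have hlb : ∀ s ∈ {l : ℝ | ∃ f : ℝ → ℝ, ContDiff ℝ 1 f ∧ f R = 0 ∧
      (∫ r in (0:ℝ)..R, (f r) ^ 2 * W r) ≠ 0 ∧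
      l = (∫ r in (0:ℝ)..R, (deriv f r) ^ 2 * W r) /
        (∫ r in (0:ℝ)..R, (f r) ^ 2 * W r)}, lam ≤ s := by
    rintro s ⟨f, hf1, hfR, hfD, rfl⟩
    have hDnn : 0 ≤ ∫ r in (0:ℝ)..R, (f r)^2 * W r := by
      apply intervalIntegral.integral_nonneg hR.le
      intro u hu
      exact mul_nonneg (sq_nonneg _) (hWnn u hu)
    have hDp : 0 < ∫ r in (0:ℝ)..R, (f r)^2 * W r := lt_of_le_of_ne hDnn (Ne.symm hfD)
    rw [le_div_iff₀ hDp]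
    exact hBarta f hf1 hfR
  exact le_antisymm (le_csInf ⟨lam, hmem⟩ hlb) (csInf_le ⟨lam, fun s hs => hlb s hs⟩ hmem)


/-- a positive Dirichlet eigenfunction with eigenvalue λ,
together with a positive Dirichlet function whose Barta quotient is constantly
λ, forces λ to be the first Dirichlet eigenvalue. -/
theorem stmt_19 (m : ℕ) (hm : 2 ≤ m) (R : ℝ) (hR : 0 < R)
    (w : ℝ → ℝ) (hw : ContDiff ℝ (⊤ : ℕ∞) w) (hw0 : w 0 = 0) (hw1 : deriv w 0 = 1)
    (hwpos : ∀ r ∈ Set.Ioc (0:ℝ) R, 0 < w r)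
    (lam : ℝ) (φ ψ : ℝ → ℝ)
    (hφ : ContDiffOn ℝ 2 φ (Set.Icc 0 R))
    (hφpos : ∀ r ∈ Set.Ico (0:ℝ) R, 0 < φ r) (hφR : φ R = 0)
    (hφode : ∀ r ∈ Set.Ioo (0:ℝ) R,
      deriv (deriv φ) r + ((m : ℝ) - 1) * (deriv w r / w r) * deriv φ r = -lam * φ r)
    (hψ : ContDiffOn ℝ 2 ψ (Set.Icc 0 R))
    (hψpos : ∀ r ∈ Set.Ico (0:ℝ) R, 0 < ψ r) (hψR : ψ R = 0)
    (hψquot : ∀ r ∈ Set.Ioo (0:ℝ) R,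
      -(deriv (deriv ψ) r + ((m : ℝ) - 1) * (deriv w r / w r) * deriv ψ r) / ψ r = lam) :
    lam = firstDirichletEigenvalue m w R := by
  obtain ⟨n, rfl⟩ : ∃ n, m = n + 2 := ⟨m - 2, by omega⟩
  have hcoef : ((n + 2 : ℕ) : ℝ) - 1 = (n : ℝ) + 1 := by push_cast; ring
  have hφode' : ∀ r ∈ Set.Ioo (0:ℝ) R,
      deriv (deriv φ) r + ((n : ℝ) + 1) * (deriv w r / w r) * deriv φ r = -lam * φ r := by
    intro r hr
    rw [← hcoef]
    exact hφode r hr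
  have hψode' : ∀ r ∈ Set.Ioo (0:ℝ) R,
      deriv (deriv ψ) r + ((n : ℝ) + 1) * (deriv w r / w r) * deriv ψ r = -lam * ψ r := by
    intro r hr
    have hψne : ψ r ≠ 0 := (hψpos r ⟨hr.1.le, hr.2⟩).ne'
    have h1 := hψquot r hr
    rw [div_eq_iff hψne] at h1
    rw [← hcoef]
    linarith
  have hsub : n + 2 - 1 = n + 1 := rfl
  rw [firstDirichletEigenvalue]
  simp only [hsub]
  exact stmt_19' n R hR w hw hw0 hwpos lam φ ψ hφ hφpos hφR hφode' hψ hψpos hψR hψode'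
end
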